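/- arXiv:1711.05525 — 12 statements merged into one kernel-verified Lean document; each statement's English description precedes it below -/
import Mathlib

section
/- For every integer $n \geq 3$, the word $t \cdot (y^{n-1}x)^{n-1}(xy)^{n-1}x^2 \cdot t^{n-1}$ over the three-letter alphabet $\{x,y,t\}$ has length $n^2 + 2n$ and contains no factor of the form $u^n$ with $u$ a nonempty word. -/
/-- `k`-fold concatenation of a word. -/
def wpow {A : Type*} (u : List A) (k : ℕ) : List A := (List.replicate k u).flatten

lemma wpow_succ {A : Type*} (u : List A) (k : ℕ) : wpow u (k+1) = u ++ wpow u k := by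
  simp [wpow, List.replicate_succ]

lemma wpow_len {A : Type*} (u : List A) (k : ℕ) : (wpow u k).length = k * u.length := by
  induction k with
  | zero => simp [wpow]
  | succ k ih => rw [wpow_succ, List.length_append, ih, Nat.succ_mul, Nat.add_comm]

lemma wpow_getElem? {A : Type*} (u : List A) (k i : ℕ) (hi : i < k * u.length) :
    (wpow u k)[i]? = u[i % u.length]? := by
  induction k generalizing i with
  | zero => simp at hi
  | succ k ih =>
    rw [wpow_succ, List.getElem?_append]
    split
    · rw [Nat.mod_eq_of_lt (by omega)]
    · rename_i h
      push_neg at h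
      have hi' : i - u.length < k * u.length := by
        rw [Nat.succ_mul] at hi; omega
      rw [ih _ hi']
      congr 1
      conv_rhs => rw [show i = (i - u.length) + u.length by omega]
      rw [Nat.add_mod_right]

lemma gea_left {A : Type*} (l₁ l₂ : List A) (i : ℕ) (h : i < l₁.length) :
    (l₁ ++ l₂)[i]? = l₁[i]? := by rw [List.getElem?_append, if_pos h]

lemma gea_right {A : Type*} (l₁ l₂ : List A) (i j : ℕ) (h : i = l₁.length + j) :
    (l₁ ++ l₂)[i]? = l₂[j]? := by
  subst h; rw [List.getElem?_append_right (by omega)]; congr 1; omega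

def gword {A : Type*} (x y : A) (n a : ℕ) : ℕ → A := fun i =>
  if i < a then (if i % n = n - 1 then x else y)
  else if i = a + (2 * n - 1) then x
  else if (i - a) % 2 = 0 then x else y

lemma aux1 (n : ℕ) (h : 2 ≤ n) :
    n*(n-2) + n = n*(n-1) ∧ n*(n-1) + n = n*n ∧ n*(n-1) + 2*n = n*(n+1) := by
  obtain ⟨m, rfl⟩ : ∃ m, n = m + 2 := ⟨n - 2, by omega⟩
  have h1 : m + 2 - 2 = m := by omega
  have h2 : m + 2 - 1 = m + 1 := by omega
  rw [h1, h2]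
  refine ⟨by ring, by ring, by ring⟩

lemma no_power_M {A : Type*} {x y : A} (hxy : x ≠ y) (n a p s' : ℕ) (hn : 3 ≤ n)
    (hp : 1 ≤ p) (ha : a = n * (n - 1)) (g : ℕ → A)
    (hg : ∀ i, i < a + 2 * n →
      g i = if i < a then (if i % n = n - 1 then x else y)
            else if i = a + (2 * n - 1) then x
            else if (i - a) % 2 = 0 then x else y)
    (hse : s' + n * p ≤ a + 2 * n)
    (hG : ∀ j, j < n * p → g (s' + j) = g (s' + j % p)) : False := by
  obtain ⟨hT, hA2, hA3⟩ := aux1 n (by omega)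
  rw [← ha] at hT hA2 hA3
  set T := n * (n - 2) with hTdef
  have hTmod : T % n = 0 := by rw [hTdef]; exact Nat.mul_mod_right n (n-2)
  have h2n : 2 * n ≤ a := by
    have h1 : n * 1 ≤ n * (n - 2) := Nat.mul_le_mul_left n (by omega)
    rw [Nat.mul_one, ← hTdef] at h1
    omega
  set E := n * p with hEdef
  have hper : ∀ j, j + p < E → g (s' + j) = g (s' + (j + p)) := by
    intro j hj
    have h1 := hG j ((Nat.le_add_right j p).trans_lt hj)
    have h2 := hG (j + p) hj
    rw [Nat.add_mod_right] at h2
    exact h1.trans h2.symm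
  have hpn1 : p ≤ n + 1 := by
    refine Nat.le_of_mul_le_mul_left ?_ (show 0 < n by omega)
    rw [← hEdef, ← hA3]; omega
  have hga : g a = x := by
    rw [hg a (by omega), if_neg (by omega), if_neg (by omega), if_pos (by omega)]
  by_cases hc1 : p = n + 1
  · rw [hc1] at hEdef
    rw [← hEdef] at hA3
    have hs0 : s' = 0 := by omega
    have h1 := hper (n - 2) (by omega)
    rw [hs0] at h1
    simp only [Nat.zero_add] at h1
    rw [show n - 2 + p = n + (n - 1) by omega] at h1
    have e1 : g (n - 2) = y := by
      rw [hg _ (by omega), if_pos (by omega),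
        if_neg (by rw [Nat.mod_eq_of_lt (show n - 2 < n by omega)]; omega)]
    have e2 : g (n + (n - 1)) = x := by
      rw [hg _ (by omega), if_pos (by omega), if_pos ?_]
      rw [Nat.add_mod_left, Nat.mod_eq_of_lt (by omega)]
    rw [e1, e2] at h1
    exact hxy h1.symm
  by_cases hc2 : p = n
  · rw [hc2] at hEdef
    rw [← hEdef] at hA2
    have h1 := hper (a - n - s') (by omega)
    rw [show s' + (a - n - s') = a - n by omega,
        show s' + (a - n - s' + p) = a by omega] at h1
    have e1 : g (a - n) = y := by
      rw [hg _ (by omega), if_pos (by omega), if_neg ?_]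
      rw [show a - n = T by omega, hTmod]; omega
    rw [e1, hga] at h1
    exact hxy h1.symm
  have hq0 := Nat.div_add_mod s' n
  set Q := n * (s' / n) with hQdef
  set R := s' % n with hRdef
  have hr : R < n := by rw [hRdef]; exact Nat.mod_lt _ (by omega)
  have hQmod : (Q + (n - 1)) % n = n - 1 := by
    rw [hQdef, Nat.mul_add_mod, Nat.mod_eq_of_lt (by omega)]
  by_cases hc3 : p = 1
  · rw [hc3] at hEdef
    have hEn : E = n := by rw [hEdef, Nat.mul_one]
    have hconst : ∀ j, j < n → g (s' + j) = g s' := by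
      intro j hj
      have h1 := hG j (by omega)
      rw [hc3, Nat.mod_one, Nat.add_zero] at h1
      exact h1
    have hx3 : ∃ mm, s' ≤ mm ∧ mm < s' + n ∧ g mm = x := by
      by_cases hca : s' + n ≤ a
      · refine ⟨Q + (n - 1), by omega, by omega, ?_⟩
        rw [hg _ (by omega), if_pos (by omega), if_pos hQmod]
      · by_cases hcb : s' < a
        · refine ⟨a - 1, by omega, by omega, ?_⟩
          rw [hg _ (by omega), if_pos (by omega), if_pos ?_]
          rw [show a - 1 = T + (n - 1) by omega, hTdef, Nat.mul_add_mod,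
            Nat.mod_eq_of_lt (by omega)]
        · push_neg at hcb
          refine ⟨s' + (s' - a) % 2, by omega, by omega, ?_⟩
          rw [hg _ (by omega), if_neg (by omega)]
          by_cases hex : s' + (s' - a) % 2 = a + (2 * n - 1)
          · rw [if_pos hex]
          · rw [if_neg hex, if_pos (by omega)]
    obtain ⟨mm, hm1, hm2, hm3⟩ := hx3
    have h0 : g s' = x := by
      have h4 := hconst (mm - s') (by omega)
      rw [show s' + (mm - s') = mm by omega] at h4
      rw [← h4]; exact hm3
    have h1 : g (s' + 1) = x := (hconst 1 (by omega)).trans h0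
    have h2 : g (s' + 2) = x := (hconst 2 (by omega)).trans h0
    by_cases hd1 : s' + 1 < a
    · have e0 : s' % n = n - 1 := by
        by_contra hne
        rw [hg s' (by omega), if_pos (by omega), if_neg hne] at h0
        exact hxy h0.symm
      have e1 : (s' + 1) % n = n - 1 := by
        by_contra hne
        rw [hg _ (by omega), if_pos (by omega), if_neg hne] at h1
        exact hxy h1.symm
      have e2 : (s' + 1) % n = 0 := by
        rw [Nat.add_mod, e0, Nat.mod_eq_of_lt (show 1 < n by omega),
          show n - 1 + 1 = n by omega, Nat.mod_self]
      omega
    · by_cases hd2 : s' + 1 = a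
      · rw [show s' + 2 = a + 1 by omega] at h2
        rw [hg _ (by omega), if_neg (by omega), if_neg (by omega),
          if_neg (by omega)] at h2
        exact hxy h2.symm
      · have hd3 : a ≤ s' := by omega
        have e0 : (s' - a) % 2 = 0 := by
          by_contra hne
          rw [hg s' (by omega), if_neg (by omega), if_neg (by omega),
            if_neg (by omega)] at h0
          exact hxy h0.symm
        have e1 : (s' + 1 - a) % 2 = 0 := by
          by_contra hne
          rw [hg _ (by omega), if_neg (by omega), if_neg (by omega),
            if_neg (by omega)] at h1
          exact hxy h1.symm
        omega
  have hp2 : 2 ≤ p := by omega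
  have hpn : p ≤ n - 1 := by omega
  have hD' : (n - 1) * p + p = E := by
    rw [hEdef, ← Nat.succ_mul]; congr 1; omega
  set D := (n - 1) * p with hDdef
  have hD2 : (n - 1) * 2 ≤ D := by rw [hDdef]; exact Nat.mul_le_mul_left _ hp2
  by_cases hca : s' + n + p ≤ a
  · have h1 := hper (Q + (n - 1) - s') (by omega)
    rw [show s' + (Q + (n - 1) - s') = Q + (n - 1) by omega,
        show s' + (Q + (n - 1) - s' + p) = Q + (n - 1) + p by omega] at h1
    have e1 : g (Q + (n - 1)) = x := by
      rw [hg _ (by omega), if_pos (by omega), if_pos hQmod]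
    have hmod2 : (Q + (n - 1) + p) % n = p - 1 := by
      rw [show Q + (n - 1) + p = n * (s' / n + 1) + (p - 1)
        by rw [Nat.mul_add, Nat.mul_one, ← hQdef]; omega]
      rw [Nat.mul_add_mod, Nat.mod_eq_of_lt (by omega)]
    have e2 : g (Q + (n - 1) + p) = y := by
      rw [hg _ (by omega), if_pos (by omega), if_neg (by rw [hmod2]; omega)]
    rw [e1, e2] at h1
    exact hxy h1
  · push_neg at hca
    by_cases hb1 : s' + p ≤ a
    · have h1 := hper (a - p - s') (by omega)
      rw [show s' + (a - p - s') = a - p by omega,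
          show s' + (a - p - s' + p) = a by omega] at h1
      have e1 : g (a - p) = y := by
        rw [hg _ (by omega), if_pos (by omega), if_neg ?_]
        rw [show a - p = T + (n - p) by omega, hTdef, Nat.mul_add_mod,
          Nat.mod_eq_of_lt (by omega)]
        omega
      rw [e1, hga] at h1
      exact hxy h1.symm
    · push_neg at hb1
      have hp2' : p = 2 := by
        by_contra hne
        have hD3 : (n - 1) * 3 ≤ D := by
          rw [hDdef]; exact Nat.mul_le_mul_left _ (by omega)
        omega
      have hsa : s' ≤ a := by omega
      by_cases hsa2 : s' = a
      · have h1 := hper (2 * n - 3) (by omega)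
        rw [hsa2] at h1
        have e1 : g (a + (2 * n - 3)) = y := by
          rw [hg _ (by omega), if_neg (by omega), if_neg (by omega),
            if_neg (by omega)]
        have e2 : g (a + (2 * n - 3 + p)) = x := by
          rw [show 2 * n - 3 + p = 2 * n - 1 by omega]
          rw [hg _ (by omega), if_neg (by omega), if_pos rfl]
        rw [e1, e2] at h1
        exact hxy h1.symm
      · have hsa3 : s' = a - 1 := by omega
        have h1 := hper 0 (by omega)
        rw [show s' + 0 = a - 1 by omega, show s' + (0 + p) = a + 1 by omega] at h1
        have e1 : g (a - 1) = x := by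
          rw [hg _ (by omega), if_pos (by omega), if_pos ?_]
          rw [show a - 1 = T + (n - 1) by omega, hTdef, Nat.mul_add_mod,
            Nat.mod_eq_of_lt (by omega)]
        have e2 : g (a + 1) = y := by
          rw [hg _ (by omega), if_neg (by omega), if_neg (by omega),
            if_neg (by omega)]
        rw [e1, e2] at h1
        exact hxy h1

theorem stmt2 {A : Type*} (x y t : A)
    (hxy : x ≠ y) (hxt : x ≠ t) (hyt : y ≠ t)
    (n : ℕ) (hn : 3 ≤ n)
    (W : List A)
    (hW : W = [t] ++ wpow (wpow [y] (n - 1) ++ [x]) (n - 1)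
            ++ wpow ([x] ++ [y]) (n - 1) ++ [x, x] ++ wpow [t] (n - 1)) :
    W.length = n ^ 2 + 2 * n ∧
      ∀ u : List A, u ≠ [] → ¬ (wpow u n) <:+: W := by
  obtain ⟨hAX1, hAX2, hAX3⟩ := aux1 n (by omega)
  have hnn : n ^ 2 = n * n := pow_two n
  set K := (n - 1) * n with hKdef
  have hKn : K + n = n * n := by rw [hKdef, Nat.mul_comm]; exact hAX2
  have h2nK : 2 * n ≤ K := by
    have h1 : 2 * n ≤ (n - 1) * n := Nat.mul_le_mul_right n (by omega)
    rw [← hKdef] at h1; exact h1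
  have hlen1 : (wpow [y] (n-1) ++ [x]).length = n := by
    simp [wpow_len]; omega
  -- the right-associated version of W
  set V : List A := [t] ++ (wpow (wpow [y] (n - 1) ++ [x]) (n - 1) ++
      (wpow ([x] ++ [y]) (n - 1) ++ ([x, x] ++ wpow [t] (n - 1)))) with hVdef
  have hWV : W = V := by rw [hW, hVdef]; simp [List.append_assoc]
  have hVlen : V.length = 1 + (K + 2 * n) + (n - 1) := by
    rw [hVdef]
    simp [List.length_append, wpow_len, hlen1]
    omega
  -- region access lemmas
  have hgA : ∀ i, i < K → V[1+i]? = some (if i % n = n - 1 then x else y) := by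
    intro i hi
    rw [hVdef]
    rw [gea_right [t] _ (1+i) i (by simp)]
    rw [gea_left _ _ i (by rw [wpow_len, hlen1]; rw [hKdef] at hi; exact hi)]
    rw [wpow_getElem? _ _ i (by rw [hlen1]; rw [hKdef] at hi; exact hi), hlen1]
    have him : i % n < n := Nat.mod_lt _ (by omega)
    by_cases hc : i % n = n - 1
    · rw [if_pos hc, hc, gea_right (wpow [y] (n-1)) [x] (n-1) 0 (by simp [wpow_len])]
      rfl
    · rw [if_neg hc, gea_left _ _ _ (by simp [wpow_len]; omega)]
      rw [wpow_getElem? _ _ _ (by simp; omega)]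
      simp [Nat.mod_one]
  have hgB : ∀ i, i < (n-1)*2 →
      V[1 + (K + i)]? = some (if i % 2 = 0 then x else y) := by
    intro i hi
    rw [hVdef]
    rw [gea_right [t] _ (1 + (K + i)) (K + i) (by simp)]
    rw [gea_right _ _ (K + i) i (by rw [wpow_len, hlen1, ← hKdef])]
    rw [gea_left _ _ i (by simp [wpow_len]; omega)]
    rw [wpow_getElem? _ _ i (by simp; omega)]
    have h2 : i % 2 = 0 ∨ i % 2 = 1 := by omega
    have hL2 : ([x] ++ [y] : List A).length = 2 := rfl
    rw [hL2]
    rcases h2 with h2 | h2 <;> rw [h2] <;> rfl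
  have hgX : ∀ i, i < 2 → V[1 + (K + ((n-1)*2 + i))]? = some x := by
    intro i hi
    rw [hVdef]
    rw [gea_right [t] _ _ (K + ((n-1)*2 + i)) (by simp)]
    rw [gea_right _ _ _ ((n-1)*2 + i) (by rw [wpow_len, hlen1, ← hKdef])]
    rw [gea_right _ _ _ i (by simp [wpow_len])]
    rw [gea_left _ _ i (by simp; omega)]
    interval_cases i <;> rfl
  have hgC : ∀ i, i < n - 1 → V[1 + (K + ((n-1)*2 + (2 + i)))]? = some t := by
    intro i hi
    rw [hVdef]
    rw [gea_right [t] _ _ (K + ((n-1)*2 + (2+i))) (by simp)]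
    rw [gea_right _ _ _ ((n-1)*2 + (2+i)) (by rw [wpow_len, hlen1, ← hKdef])]
    rw [gea_right _ _ _ (2+i) (by simp [wpow_len])]
    rw [gea_right _ _ _ i (by simp)]
    rw [wpow_getElem? _ _ i (by simp; omega)]
    simp [Nat.mod_one]
  have hV0 : V[0]? = some t := by
    rw [hVdef, gea_left _ _ 0 (by simp)]; rfl
  -- the combined letter function on the x/y part
  have hWg : ∀ i, i < K + 2*n → V[1+i]? = some (gword x y n K i) := by
    intro i hi
    by_cases h1 : i < K
    · rw [hgA i h1]
      simp only [gword]
      rw [if_pos h1]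
    · push_neg at h1
      by_cases h2 : i < K + (n-1)*2
      · rw [show 1 + i = 1 + (K + (i - K)) by omega, hgB (i - K) (by omega)]
        simp only [gword]
        rw [if_neg (show ¬ i < K by omega), if_neg (show ¬ i = K + (2*n-1) by omega)]
      · by_cases h3 : i = K + ((n-1)*2)
        · rw [show 1 + i = 1 + (K + ((n-1)*2 + 0)) by omega, hgX 0 (by omega)]
          simp only [gword]
          rw [if_neg (show ¬ i < K by omega), if_neg (show ¬ i = K + (2*n-1) by omega),
            if_pos (show (i - K) % 2 = 0 by omega)]
        · have h4 : i = K + ((n-1)*2 + 1) := by omega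
          rw [show 1 + i = 1 + (K + ((n-1)*2 + 1)) by omega, hgX 1 (by omega)]
          simp only [gword]
          rw [if_neg (show ¬ i < K by omega), if_pos (show i = K + (2*n-1) by omega)]
  refine ⟨by rw [hWV, hVlen, hnn]; omega, ?_⟩
  intro u hu hinf
  have hp : 0 < u.length := List.length_pos_iff.mpr hu
  rw [hWV] at hinf
  obtain ⟨l₁, l₂, hfac⟩ := hinf
  have hflen := congrArg List.length hfac
  rw [hVlen] at hflen
  simp only [List.length_append, wpow_len] at hflen
  -- hflen : l₁.length + n * u.length + l₂.length = 1 + (K + 2*n) + (n-1)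
  set NP := n * u.length with hNPdef
  have hNPgeu : u.length ≤ NP := by rw [hNPdef]; exact Nat.le_mul_of_pos_left _ (by omega)
  have hNPgen : n ≤ NP := by rw [hNPdef]; exact Nat.le_mul_of_pos_right _ hp
  have hval : ∀ j, j < NP → V[l₁.length + j]? = u[j % u.length]? := by
    intro j hj
    rw [← hfac, List.append_assoc]
    rw [gea_right l₁ _ _ j rfl]
    rw [gea_left _ _ j (by rw [wpow_len, ← hNPdef]; exact hj)]
    exact wpow_getElem? u n j (by rw [← hNPdef]; exact hj)
  have hvals : ∀ j, (hj : j < NP) →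
      V[l₁.length + j]? = some (u[j % u.length]'(Nat.mod_lt _ hp)) := by
    intro j hj
    rw [hval j hj]
    exact List.getElem?_eq_getElem _
  by_cases hct : ∃ r, ∃ hr : r < u.length, u[r] = t
  · obtain ⟨r, hr, hrt⟩ := hct
    have hq : ∀ k, k < n → V[l₁.length + (r + k * u.length)]? = some t := by
      intro k hk
      have hkb : r + k * u.length < NP := by
        have h1 : (k+1) * u.length ≤ NP := by
          rw [hNPdef]; exact Nat.mul_le_mul_right _ (by omega)
        have h2 : (k+1) * u.length = k * u.length + u.length := Nat.succ_mul k u.length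
        set KU := k * u.length
        set KU2 := (k+1) * u.length
        omega
      rw [hval _ hkb, Nat.add_mul_mod_self_right, Nat.mod_eq_of_lt hr,
        List.getElem?_eq_getElem hr, hrt]
    have hnott : ∀ i, i < K + 2*n → ¬ V[1+i]? = some t := by
      intro i hi hcon
      rw [hWg i hi] at hcon
      have hcon2 := Option.some.inj hcon
      have hxyv : gword x y n K i = x ∨ gword x y n K i = y := by
        simp only [gword]; split_ifs <;> simp
      rcases hxyv with h | h <;> rw [h] at hcon2
      exacts [hxt hcon2, hyt hcon2]
    have h00 := hq 0 (by omega)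
    simp only [Nat.zero_mul, Nat.add_zero] at h00
    have hq0pos : l₁.length + r = 0 ∨ 1 + (K + 2*n) ≤ l₁.length + r := by
      by_contra hcon
      push_neg at hcon
      obtain ⟨h1, h2⟩ := hcon
      have h3 := hnott (l₁.length + r - 1) (by omega)
      rw [show 1 + (l₁.length + r - 1) = l₁.length + r by omega] at h3
      exact h3 h00
    rcases hq0pos with hq0 | hq0
    · have hl0 : l₁.length = 0 ∧ r = 0 := by omega
      have h1 := hq 1 (by omega)
      simp only [Nat.one_mul] at h1
      rw [show l₁.length + (r + u.length) = u.length by omega] at h1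
      have hPle : u.length ≤ n + 2 := by
        refine Nat.le_of_mul_le_mul_left ?_ (show 0 < n by omega)
        have h5 : n * (n + 2) = n * n + 2 * n := by ring
        rw [← hNPdef, h5, ← hKn]
        omega
      have h6 := hnott (u.length - 1) (by omega)
      rw [show 1 + (u.length - 1) = u.length by omega] at h6
      exact h6 h1
    · have hlast := hq (n-1) (by omega)
      have hub : ¬ V.length ≤ l₁.length + (r + (n-1) * u.length) := by
        intro hge
        rw [List.getElem?_eq_none hge] at hlast
        cases hlast
      rw [hVlen] at hub
      have hDU : (n-1) * 1 ≤ (n-1) * u.length := Nat.mul_le_mul_left _ hp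
      rw [Nat.mul_one] at hDU
      set DU := (n-1) * u.length
      omega
  · push_neg at hct
    have hnt : ∀ j, j < NP → ¬ V[l₁.length + j]? = some t := by
      intro j hj hcon
      rw [hvals j hj] at hcon
      exact hct _ (Nat.mod_lt _ hp) (Option.some.inj hcon)
    have hs1 : 1 ≤ l₁.length := by
      by_contra h
      push_neg at h
      have h0 := hnt 0 (by omega)
      rw [show l₁.length + 0 = 0 by omega] at h0
      exact h0 hV0
    have hs2 : l₁.length + NP ≤ 1 + (K + 2*n) := by
      by_contra h
      push_neg at h
      have hδt := hgC 0 (by omega)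
      rw [show 1 + (K + ((n-1)*2 + (2 + 0))) = 1 + (K + 2*n) by omega] at hδt
      have hj : 1 + (K + 2*n) - l₁.length < NP := by omega
      have h9 := hnt _ hj
      rw [show l₁.length + (1 + (K + 2*n) - l₁.length) = 1 + (K + 2*n) by omega] at h9
      exact h9 hδt
    have hkey : ∀ j', j' < NP →
        gword x y n K ((l₁.length - 1) + j') = u[j' % u.length]'(Nat.mod_lt _ hp) := by
      intro j' hj'
      have e1 := hWg ((l₁.length - 1) + j') (by omega)
      rw [show 1 + ((l₁.length - 1) + j') = l₁.length + j' by omega] at e1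
      exact Option.some.inj (e1.symm.trans (hvals j' hj'))
    refine no_power_M hxy n K u.length (l₁.length - 1) hn hp
      (by rw [hKdef, Nat.mul_comm]) (gword x y n K) (fun i _ => rfl) ?_ ?_
    · rw [← hNPdef]; omega
    · intro j hj
      rw [← hNPdef] at hj
      rw [hkey j hj, hkey (j % u.length) (lt_of_lt_of_le (Nat.mod_lt _ hp) hNPgeu)]
      have hmm : j % u.length % u.length = j % u.length :=
        Nat.mod_eq_of_lt (Nat.mod_lt _ hp)
      simp only [hmm]
end

section
/- Let $w = abcacb$ over the three-letter alphabet $\{a,b,c\}$. If $x, u, y$ are words such that $x u^2 y \in w^*$ (i.e., $x u^2 y$ is a power of $w$), then $6$ divides $|u|$ and $xy \in w^*$. -/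
namespace Stmt4Aux

def pat (n : ℕ) : ℕ :=
  match n % 6 with
  | 0 => 0 | 1 => 1 | 2 => 2 | 3 => 0 | 4 => 2 | _ => 1

lemma pat_congr {m n : ℕ} (h : m % 6 = n % 6) : pat m = pat n := by
  unfold pat; rw [h]

lemma wpow_succ {A : Type*} (v : List A) (k : ℕ) :
    wpow v (k+1) = v ++ wpow v k := by
  simp [wpow, List.replicate_succ]

lemma wpow_length {A : Type*} (v : List A) (k : ℕ) :
    (wpow v k).length = k * v.length := by
  induction k with
  | zero => simp [wpow]
  | succ k ih => rw [wpow_succ]; simp [ih]; ring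

lemma wpow_getElem? {A : Type*} (v : List A) (hv : v.length = 6) (k : ℕ) :
    ∀ n, (wpow v k)[n]? = if n < 6*k then v[n % 6]? else none := by
  induction k with
  | zero => intro n; simp [wpow]
  | succ k ih =>
    intro n
    rw [wpow_succ]
    by_cases hn : n < 6
    · rw [List.getElem?_append_left (by omega)]
      rw [Nat.mod_eq_of_lt hn]
      simp [show n < 6*(k+1) by omega]
    · rw [List.getElem?_append_right (by omega), hv, ih (n-6)]
      have h1 : (n-6) % 6 = n % 6 := by omega
      have h2 : (n - 6 < 6*k) ↔ (n < 6*(k+1)) := by omega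
      rw [h1]
      simp only [h2]

lemma letter {A : Type*} {a b c : A} (hab : a ≠ b) (hac : a ≠ c) (hbc : b ≠ c) :
    ∀ j < 6, ∀ j' < 6,
      ([a,b,c,a,c,b] : List A)[j]? = ([a,b,c,a,c,b] : List A)[j']? →
      pat j = pat j' := by
  intro j hj j' hj' h
  interval_cases j <;> interval_cases j' <;> simp_all [pat]

lemma core (p L : ℕ) (h : ∀ i < L, pat (p+i) = pat (p+L+i)) : 6 ∣ L := by
  by_cases hL : L < 6
  · have key : ∀ q < 6, ∀ L' < 6, (∀ i < L', pat (q+i) = pat (q+L'+i)) → L' = 0 := by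
      decide
    have h0 : L = 0 := by
      refine key (p % 6) (by omega) L hL (fun i hi => ?_)
      calc pat (p % 6 + i) = pat (p + i) := pat_congr (by omega)
        _ = pat (p + L + i) := h i hi
        _ = pat (p % 6 + L + i) := pat_congr (by omega)
    omega
  · have key2 : ∀ q < 6, ∀ r < 6, (∀ j < 6, pat (q+j) = pat (q+j+r)) → r = 0 := by
      decide
    have h0 : L % 6 = 0 := by
      refine key2 (p % 6) (by omega) (L % 6) (by omega) (fun j hj => ?_)
      calc pat (p % 6 + j) = pat (p + j) := pat_congr (by omega)
        _ = pat (p + L + j) := h j (by omega)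
        _ = pat (p % 6 + j + L % 6) := pat_congr (by omega)
    omega

end Stmt4Aux

open Stmt4Aux in
theorem stmt4 {A : Type*} (a b c : A)
    (hab : a ≠ b) (hac : a ≠ c) (hbc : b ≠ c)
    (x u y : List A) (k : ℕ)
    (h : x ++ u ++ u ++ y = wpow [a, b, c, a, c, b] k) :
    6 ∣ u.length ∧ ∃ m : ℕ, x ++ y = wpow [a, b, c, a, c, b] m := by
  set W : List A := [a,b,c,a,c,b] with hW
  have hWlen : W.length = 6 := by simp [hW]
  set p := x.length with hp
  set L := u.length with hLdef
  have hlen : p + L + L + y.length = 6 * k := by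
    have := congrArg List.length h
    simp only [List.length_append, wpow_length, hWlen] at this
    omega
  have hget := wpow_getElem? W hWlen k
  -- elements of the full word
  have hfull : ∀ n, (x ++ u ++ u ++ y)[n]? = if n < 6*k then W[n % 6]? else none := by
    intro n; rw [h, hget]
  -- key square condition
  have hsq : ∀ i < L, pat (p+i) = pat (p+L+i) := by
    intro i hi
    have e1 : (x ++ u ++ u ++ y)[p+i]? = u[i]? := by
      rw [show x ++ u ++ u ++ y = x ++ (u ++ (u ++ y)) by simp,
        List.getElem?_append_right (by omega), List.getElem?_append_left (by omega)]
      congr 1; omega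
    have e2 : (x ++ u ++ u ++ y)[p+L+i]? = u[i]? := by
      rw [show x ++ u ++ u ++ y = x ++ (u ++ (u ++ y)) by simp,
        List.getElem?_append_right (by omega), List.getElem?_append_right (by omega),
        List.getElem?_append_left (by omega)]
      congr 1; omega
    have e3 : (if p+i < 6*k then W[(p+i) % 6]? else none)
        = (if p+L+i < 6*k then W[(p+L+i) % 6]? else none) := by
      rw [← hfull, ← hfull, e1, e2]
    rw [if_pos (by omega), if_pos (by omega)] at e3
    have := letter hab hac hbc ((p+i) % 6) (by omega) ((p+L+i) % 6) (by omega) e3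
    calc pat (p+i) = pat ((p+i) % 6) := pat_congr (by omega)
      _ = pat ((p+L+i) % 6) := this
      _ = pat (p+L+i) := pat_congr (by omega)
  have hdvd : 6 ∣ L := core p L hsq
  refine ⟨hdvd, ?_⟩
  obtain ⟨m, hm⟩ := hdvd
  have hmk : 2 * m ≤ k := by omega
  refine ⟨k - 2*m, ?_⟩
  apply List.ext_getElem?
  intro n
  rw [wpow_getElem? W hWlen]
  by_cases hn : n < p
  · have e1 : (x ++ y)[n]? = x[n]? := List.getElem?_append_left (by omega)
    have e2 : (x ++ u ++ u ++ y)[n]? = x[n]? := by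
      rw [show x ++ u ++ u ++ y = x ++ (u ++ (u ++ y)) by simp,
        List.getElem?_append_left (by omega)]
    rw [e1, ← e2, hfull, if_pos (by omega), if_pos (by omega)]
  · have e1 : (x ++ y)[n]? = y[n - p]? := List.getElem?_append_right (by omega)
    have e2 : (x ++ u ++ u ++ y)[n + 12*m]? = y[n - p]? := by
      rw [show x ++ u ++ u ++ y = x ++ (u ++ (u ++ y)) by simp,
        List.getElem?_append_right (by omega), List.getElem?_append_right (by omega),
        List.getElem?_append_right (by omega)]
      congr 1; omega
    rw [e1, ← e2, hfull]
    have hmod : (n + 12*m) % 6 = n % 6 := by omega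
    by_cases h3 : n < 6 * (k - 2*m)
    · rw [if_pos (by omega), if_pos h3, hmod]
    · rw [if_neg (by omega), if_neg h3]
end

section
/- Let $w = abcacb$ over $A = \{a,b,c\}$ and let $L_2 = (A^* \setminus F(w^*)) \cup \{w^{1+2k} : k \geq 0\}$, where $F(w^*)$ is the set of all factors of powers of $w$. Then for all words $p, q, u \in A^*$: if $pq \in L_2$ then $p u^2 q \in L_2$. -/
/-!
The infinite word `w^ω`, `w = abcacb`, has the property that every square `uu` occurring in it
has `6 ∣ |u|` (a finite check on residues mod 6). So if `p u² q` is a factor of some `w^k`, then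
deleting the square leaves the factor `p q`, read at the same position. If moreover `p q ∈ L₂`,
then `p q` is an odd power of `w`; as `w` is primitive, `p q` sits at a position divisible by 6,
and hence so does `p u² q`, which is then `w^(|pq|/6 + 2|u|/6)`, again an odd power.
-/

section Window

variable {A : Type*}

def window (x : ℕ → A) (i n : ℕ) : List A := (List.range n).map fun t => x (i + t)

@[simp]
lemma length_window (x : ℕ → A) (i n : ℕ) : (window x i n).length = n := by
  simp [window]

lemma window_add (x : ℕ → A) (i m n : ℕ) :
    window x i (m + n) = window x i m ++ window x (i + m) n := by
  simp [window, List.range_add, Nat.add_assoc]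

lemma window_eq_window_iff {x : ℕ → A} {i j n : ℕ} :
    window x i n = window x j n ↔ ∀ t < n, x (i + t) = x (j + t) := by
  simp [window, List.map_inj_left]

lemma window_eq_append_iff {x : ℕ → A} {i n : ℕ} {l₁ l₂ : List A} :
    window x i n = l₁ ++ l₂ ↔ n = l₁.length + l₂.length ∧
      l₁ = window x i l₁.length ∧ l₂ = window x (i + l₁.length) l₂.length := by
  constructor
  · intro h
    have hn : n = l₁.length + l₂.length := by simpa using congrArg List.length h
    subst hn
    rw [window_add] at h
    obtain ⟨h₁, h₂⟩ := List.append_inj h (length_window ..)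
    exact ⟨rfl, h₁.symm, h₂.symm⟩
  · rintro ⟨rfl, h₁, h₂⟩
    rw [window_add, ← h₁, ← h₂]

variable {x : ℕ → A} {m : ℕ}

lemma Function.Periodic.window_add_mul (hx : Function.Periodic x m) (i k n : ℕ) :
    window x (i + k * m) n = window x i n := by
  refine window_eq_window_iff.2 fun t _ => ?_
  rw [Nat.add_right_comm]
  exact_mod_cast hx.nat_mul k (i + t)

lemma Function.Periodic.wpow_window (hx : Function.Periodic x m) (k : ℕ) :
    wpow (window x 0 m) k = window x 0 (k * m) := by
  induction k with
  | zero => simp [wpow, window]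
  | succ k ih =>
    rw [wpow, List.replicate_succ', List.flatten_concat, ← wpow, ih, Nat.succ_mul, window_add,
      hx.window_add_mul]

lemma Function.Periodic.exists_infix_wpow_iff (hx : Function.Periodic x m) (hm : 0 < m)
    (v : List A) :
    (∃ k, v <:+: wpow (window x 0 m) k) ↔ ∃ i, v = window x i v.length := by
  simp only [hx.wpow_window]
  constructor
  · rintro ⟨k, s, t, h⟩
    obtain ⟨-, hsv, -⟩ := window_eq_append_iff.1 h.symm
    exact ⟨s.length, by simpa using (window_eq_append_iff.1 hsv.symm).2.2⟩
  · rintro ⟨i, hv⟩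
    set r := (i + v.length) * m - (i + v.length)
    refine ⟨i + v.length, window x 0 i, window x (i + v.length) r, ?_⟩
    have hlen : (i + v.length) * m = i + v.length + r :=
      (Nat.add_sub_cancel' (Nat.le_mul_of_pos_right _ hm)).symm
    rw [hlen, window_add, window_add]
    simp only [Nat.zero_add, ← hv]

lemma Function.Periodic.append_eq_window_of_square_infix (hx : Function.Periodic x m)
    {p u q : List A} {i : ℕ} (hu : m ∣ u.length)
    (h : p ++ u ++ u ++ q = window x i (p ++ u ++ u ++ q).length) :
    p ++ q = window x i (p ++ q).length := by
  obtain ⟨-, hpuu, hq⟩ := window_eq_append_iff.1 h.symm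
  obtain ⟨-, hp, -⟩ := window_eq_append_iff.1 (window_eq_append_iff.1 hpuu.symm).2.1.symm
  obtain ⟨r, hr⟩ := hu
  have hpos : i + (p ++ u ++ u).length = i + p.length + 2 * r * m := by
    simp only [List.length_append, hr]
    ring
  have hq' : q = window x (i + p.length) q.length := by
    rwa [← hx.window_add_mul _ (2 * r), ← hpos]
  rw [List.length_append, window_add, ← hp, ← hq']

end Window

section Abcacb

open Fin.NatCast

variable {A : Type*}

/-- The letters of `abcacb` coded in `Fin 3` (`a ↦ 0`, `b ↦ 1`, `c ↦ 2`), so that the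
combinatorics of the word becomes decidable. -/
def abcacbCode : Fin 6 → Fin 3 := ![0, 1, 2, 0, 2, 1]

def abcacb (a b c : A) (n : ℕ) : A := ![a, b, c] (abcacbCode n)

lemma abcacb_periodic (a b c : A) : Function.Periodic (abcacb a b c) 6 := by
  intro n
  simp [abcacb]

lemma window_abcacb_zero_six (a b c : A) : window (abcacb a b c) 0 6 = [a, b, c, a, c, b] := by
  simp [window, abcacb, abcacbCode, List.range_succ]

lemma abcacbCode_shift_ne :
    ∀ r e : Fin 6, e ≠ 0 → ∃ t < e, abcacbCode (r + t) ≠ abcacbCode (r + e + t) := by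
  decide

lemma vec_three_injective {a b c : A} (hab : a ≠ b) (hac : a ≠ c) (hbc : b ≠ c) :
    Function.Injective ![a, b, c] := by
  intro i j h
  fin_cases i <;> fin_cases j <;> simp_all [eq_comm]

variable {a b c : A} (hab : a ≠ b) (hac : a ≠ c) (hbc : b ≠ c)
include hab hac hbc

lemma six_dvd_of_window_abcacb_eq_window_add {i e n : ℕ} (hn : min e 6 ≤ n)
    (h : window (abcacb a b c) i n = window (abcacb a b c) (i + e) n) : 6 ∣ e := by
  by_contra he
  obtain ⟨t, hte, hne⟩ := abcacbCode_shift_ne i e (by rwa [Ne, Fin.natCast_eq_zero])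
  have ht : (t : ℕ) < n := by
    rw [Fin.lt_def, Fin.val_natCast] at hte
    omega
  have := window_eq_window_iff.1 h t ht
  simp only [abcacb, Nat.cast_add, Fin.cast_val_eq_self] at this
  exact hne (vec_three_injective hab hac hbc this)

lemma six_dvd_length_of_square_infix_abcacb {p u q : List A} {i : ℕ}
    (h : p ++ u ++ u ++ q = window (abcacb a b c) i (p ++ u ++ u ++ q).length) :
    6 ∣ u.length := by
  obtain ⟨-, hpuu, -⟩ := window_eq_append_iff.1 h.symm
  obtain ⟨-, hpu, hu₂⟩ := window_eq_append_iff.1 hpuu.symm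
  obtain ⟨-, -, hu₁⟩ := window_eq_append_iff.1 hpu.symm
  refine six_dvd_of_window_abcacb_eq_window_add hab hac hbc (i := i + p.length) (n := u.length)
    (min_le_left _ _) ?_
  rw [← hu₁]
  simpa [Nat.add_assoc] using hu₂

end Abcacb

theorem stmt7 {A : Type*} (a b c : A)
    (hab : a ≠ b) (hac : a ≠ c) (hbc : b ≠ c)
    (L₂ : Set (List A))
    (hL : L₂ = {v | ¬ ∃ k : ℕ, v <:+: wpow [a, b, c, a, c, b] k}
             ∪ {v | ∃ k : ℕ, v = wpow [a, b, c, a, c, b] (1 + 2 * k)}) :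
    ∀ p q u : List A, p ++ q ∈ L₂ → p ++ u ++ u ++ q ∈ L₂ := by
  subst hL
  intro p q u hpq
  have hx := abcacb_periodic a b c
  simp only [Set.mem_union, Set.mem_ofPred_eq, ← window_abcacb_zero_six a b c,
    hx.exists_infix_wpow_iff (by norm_num)] at hpq ⊢
  simp only [hx.wpow_window] at hpq ⊢
  by_cases hfac : ∃ i, p ++ u ++ u ++ q = window (abcacb a b c) i (p ++ u ++ u ++ q).length
  swap
  · exact Or.inl hfac
  obtain ⟨i, hi⟩ := hfac
  obtain ⟨r, hr⟩ := six_dvd_length_of_square_infix_abcacb hab hac hbc hi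
  have hpq_i := hx.append_eq_window_of_square_infix ⟨r, hr⟩ hi
  obtain ⟨k, hk⟩ := hpq.resolve_left (not_not.2 ⟨i, hpq_i⟩)
  have hlen : (p ++ q).length = (1 + 2 * k) * 6 := by simpa using congrArg List.length hk
  obtain ⟨j, rfl⟩ : 6 ∣ i := by
    refine six_dvd_of_window_abcacb_eq_window_add hab hac hbc (i := 0) (n := (p ++ q).length)
      (by omega) ?_
    rw [zero_add, ← hpq_i, hlen, ← hk]
  refine Or.inr ⟨k + r, ?_⟩
  rw [hi, mul_comm 6 j, ← zero_add (j * 6), hx.window_add_mul]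
  congr 1
  simp only [List.length_append] at hlen ⊢
  omega
end

section
/- Let $n \geq 3$ and $w = (b^{n-1}a)^{n-1}(ab)^{n-1}a^2$ over the alphabet $\{a,b\}$. If $x, u, y$ are words such that $x u^n y \in w^*$, then $n^2 + n$ divides $|u|$ and $xy \in w^*$. -/
/-!
Let `N = n² + n = |w|` and `p = |u|`, and read `w^k` inside the infinite word `w^ω`, whose letters
depend only on the position mod `N`. The factor `u^n` makes `w^ω` periodic with period `p` on a
window of length `n p`. In `w^ω` the factor `aa` starts exactly at the positions congruent to
`n² - n - 1` or `n² + n - 2` mod `N`.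

If `p ≥ n + 3`, the window has length at least `N + p`, so `p` is a period of the whole tail of
`w^ω` beyond the start of the window, and then so is `g = gcd p N`. If `g < N`, shifting by `g`
maps each of the two `aa` positions to the other one, so `g = 2n - 1 = n² - n + 1`, impossible.

If `p ≤ n + 2`, no two occurrences of `aa` are `p` apart (except for `n = 3`, `p = 5`, settled by
hand), so the window contains no `aa`, which forces `p < n`. The `n` letters `a` at distance `p`
that the window then contains must all lie in one block `(ab)^(n-1)a`; this leaves only `p = 2`,
with an `aa` at one end of the window.

Once `N ∣ p`, removing `u^n` from `w^k` removes whole copies of `w`.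
-/

namespace PowerInWordPower

variable {α : Type*}

section Words

theorem wpow_succ (u : List α) (k : ℕ) : wpow u (k + 1) = u ++ wpow u k := by
  simp [wpow, List.replicate_succ]

theorem wpow_add (u : List α) (k l : ℕ) : wpow u (k + l) = wpow u k ++ wpow u l := by
  rw [wpow, List.replicate_add, List.flatten_append]; rfl

@[simp] theorem length_wpow (u : List α) (k : ℕ) : (wpow u k).length = k * u.length := by
  simp [wpow]

@[simp] theorem wpow_nil (k : ℕ) : wpow ([] : List α) k = [] := by
  simp [wpow]

theorem wpow_singleton (c : α) (k : ℕ) : wpow [c] k = List.replicate k c := by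
  simp [wpow]

theorem getD_wpow (u : List α) (d : α) {k m : ℕ} (h : m < k * u.length) :
    (wpow u k).getD m d = u.getD (m % u.length) d := by
  induction k generalizing m with
  | zero => simp at h
  | succ k ih =>
    rw [wpow_succ]
    rcases lt_or_ge m u.length with hm | hm
    · rw [List.getD_append _ _ _ _ hm, Nat.mod_eq_of_lt hm]
    · rw [List.getD_append_right _ _ _ _ hm, ih (by rw [Nat.succ_mul] at h; omega),
        ← Nat.mod_eq_sub_mod hm]

theorem getD_append_wpow_append (x u y : List α) (n : ℕ) (d : α) {j : ℕ}
    (hj : j < n * u.length) :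
    (x ++ wpow u n ++ y).getD (x.length + j) d = u.getD (j % u.length) d := by
  rw [List.append_assoc, List.getD_append_right _ _ _ _ (by omega), Nat.add_sub_cancel_left,
    List.getD_append _ _ _ _ (by simpa using hj), getD_wpow u d hj]

theorem append_eq_wpow_sub {x z y w : List α} {j k : ℕ} (h : x ++ z ++ y = wpow w k)
    (hz : z.length = j * w.length) : x ++ y = wpow w (k - j) := by
  rcases Nat.eq_zero_or_pos w.length with hw | hw
  · rw [List.length_eq_zero_iff.mp hw, wpow_nil] at h ⊢
    simp_all
  have hlen : x.length + z.length + y.length = k * w.length := by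
    simpa [Nat.add_assoc] using congrArg List.length h
  have hjk : j ≤ k := Nat.le_of_mul_le_mul_right (by omega) hw
  have hx : (wpow w (k - j)).take x.length = x := by
    have hsplit : wpow w k = wpow w (k - j) ++ wpow w j := by
      rw [← wpow_add, Nat.sub_add_cancel hjk]
    have hle : x.length ≤ (wpow w (k - j)).length := by
      rw [length_wpow, Nat.sub_mul]; omega
    rw [← List.take_append_of_le_length hle, ← hsplit, ← h, List.append_assoc, List.take_left]
  have hy : (wpow w (k - j)).drop x.length = y := by
    have hsplit : wpow w k = wpow w j ++ wpow w (k - j) := by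
      rw [← wpow_add, Nat.add_sub_cancel' hjk]
    have hzx : (x ++ z).length = (wpow w j).length + x.length := by
      rw [List.length_append, length_wpow, hz, Nat.add_comm]
    rw [← List.drop_length_add_append, ← hsplit, ← h, ← hzx, List.drop_left]
  rw [← hx, ← hy, List.take_append_drop]

end Words

section Periodicity

def PeriodicOn (f : ℕ → α) (p s L : ℕ) : Prop :=
  ∀ i, s ≤ i → i + p < s + L → f (i + p) = f i

def PeriodicFrom (f : ℕ → α) (p s : ℕ) : Prop :=
  ∀ i, s ≤ i → f (i + p) = f i

variable {f : ℕ → α} {p s : ℕ}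

theorem periodicOn_getD_append_wpow_append (x u y : List α) (n : ℕ) (d : α) :
    PeriodicOn (fun i => (x ++ wpow u n ++ y).getD i d) u.length x.length (n * u.length) := by
  intro i hi hip
  obtain ⟨j, rfl⟩ := Nat.exists_eq_add_of_le hi
  dsimp only
  rw [Nat.add_assoc, getD_append_wpow_append _ _ _ _ _ (by omega),
    getD_append_wpow_append _ _ _ _ _ (by omega), Nat.add_mod_right]

theorem PeriodicOn.apply_add_mul {L i : ℕ} (h : PeriodicOn f p s L) (hi : s ≤ i) {j : ℕ}
    (hj : i + j * p < s + L) : f (i + j * p) = f i := by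
  induction j with
  | zero => simp
  | succ j ih =>
    rw [Nat.succ_mul] at hj ⊢
    rw [← Nat.add_assoc, h _ (by omega) (by omega), ih (by omega)]

theorem PeriodicFrom.apply_add_mul {i : ℕ} (h : PeriodicFrom f p s) (hi : s ≤ i) (j : ℕ) :
    f (i + j * p) = f i := by
  induction j with
  | zero => simp
  | succ j ih => rw [Nat.succ_mul, ← Nat.add_assoc, h _ (by omega), ih]

theorem PeriodicOn.periodicFrom {N L : ℕ} (hf : Function.Periodic f N) (hN : 0 < N)
    (h : PeriodicOn f p s L) (hL : N + p ≤ L) : PeriodicFrom f p s := by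
  intro i hi
  induction i using Nat.strong_induction_on with
  | _ i ih =>
    by_cases hin : i + p < s + L
    · exact h i hi hin
    · obtain ⟨j, rfl⟩ : ∃ j, i = j + N := ⟨i - N, by omega⟩
      rw [Nat.add_right_comm, hf, hf, ih j (by omega) (by omega)]

theorem PeriodicFrom.gcd {N : ℕ} (hf : Function.Periodic f N) (h : PeriodicFrom f p s) :
    PeriodicFrom f (p.gcd N) s := by
  rcases lt_or_ge (p.gcd N) N with hlt | hge
  · obtain ⟨m, -, hm⟩ := Nat.exists_mul_mod_eq_gcd hlt
    intro i hi
    rw [← hm, ← hf.nat_mul (p * m / N), Nat.cast_id, Nat.add_assoc, Nat.mod_add_div',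
      Nat.mul_comm, h.apply_add_mul hi]
  · rcases Nat.eq_zero_or_pos N with rfl | hN
    · rwa [Nat.gcd_zero_right]
    · rw [le_antisymm (Nat.le_of_dvd hN (Nat.gcd_dvd_right p N)) hge]
      exact fun i _ => hf i

end Periodicity

section Arithmetic

theorem add_mod_cases {i d N : ℕ} (hd : d < N) :
    (i + d) % N = i % N + d ∨ (i + d) % N + N = i % N + d := by
  rcases lt_or_ge (i % N + d) N with h | h
  · left
    rw [Nat.add_mod_of_add_mod_lt (by rwa [Nat.mod_eq_of_lt hd]), Nat.mod_eq_of_lt hd]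
  · right
    rw [Nat.add_mod_add_of_le_add_mod (by rwa [Nat.mod_eq_of_lt hd]), Nat.mod_eq_of_lt hd]

theorem add_mod_of_mod_eq_pred {n r p : ℕ} (hr : r % n = n - 1) (hp1 : 1 ≤ p) (hpn : p < n) :
    (r + p) % n = p - 1 := by
  rw [Nat.add_mod, hr, Nat.mod_eq_of_lt hpn, show n - 1 + p = p - 1 + n by omega,
    Nat.add_mod_right, Nat.mod_eq_of_lt (by omega)]

variable {n : ℕ}

theorem three_mul_le_sq (hn : 3 ≤ n) : 3 * n ≤ n ^ 2 := by nlinarith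

theorem sq_add_self_mod_two (n : ℕ) : (n ^ 2 + n) % 2 = 0 := by
  rw [← Nat.even_iff, show n ^ 2 + n = n * (n + 1) by ring]
  exact Nat.even_mul_succ_self n

theorem sq_sub_self_mod_two (n : ℕ) : (n ^ 2 - n) % 2 = 0 := by
  rw [← Nat.even_iff, sq, ← Nat.mul_sub_one]
  exact Nat.even_mul_pred_self n

theorem sq_sub_self_sub_one_mod (n : ℕ) : (n ^ 2 - n - 1) % n = n - 1 := by
  rcases Nat.lt_or_ge n 2 with hn | hn
  · interval_cases n <;> rfl
  · obtain ⟨m, rfl⟩ := Nat.exists_eq_add_of_le' hn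
    have hsq : (m + 2) ^ 2 = (m + 1) + (m + 2) * m + (m + 2) + 1 := by ring
    rw [show (m + 2) ^ 2 - (m + 2) - 1 = m + 1 + (m + 2) * m by omega,
      Nat.add_mul_mod_self_left, Nat.mod_eq_of_lt (by omega)]
    rfl

end Arithmetic

section TheWord

def word (n : ℕ) (a b : α) : List α :=
  wpow (wpow [b] (n - 1) ++ [a]) (n - 1) ++ wpow [a, b] (n - 1) ++ [a, a]

-- The `a`'s of `word n a b`: the last letter of each block `b^(n-1)a`, then every other letter
-- of `(ab)^(n-1)aa` together with its last one.
def IsA (n m : ℕ) : Prop :=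
  (m < n ^ 2 - n ∧ m % n = n - 1) ∨ (n ^ 2 - n ≤ m ∧ (m % 2 = 0 ∨ m = n ^ 2 + n - 1))

instance (n m : ℕ) : Decidable (IsA n m) := by
  unfold IsA; infer_instance

-- `a` at position `i` of the infinite word `www⋯`, of which every `wpow w k` is a prefix.
def IsAInf (n i : ℕ) : Prop := IsA n (i % (n ^ 2 + n))

def IsAA (n i : ℕ) : Prop := IsAInf n i ∧ IsAInf n (i + 1)

variable {n : ℕ}

theorem length_word (a b : α) (hn : 1 ≤ n) : (word n a b).length = n ^ 2 + n := by
  obtain ⟨m, rfl⟩ := Nat.exists_eq_add_of_le' hn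
  simp [word]
  ring

theorem getD_block (a b : α) (k j : ℕ) :
    (wpow [b] k ++ [a]).getD j b = if j = k then a else b := by
  rw [wpow_singleton]
  rcases lt_trichotomy j k with h | rfl | h
  · rw [List.getD_append _ _ _ _ (by simpa using h), if_neg h.ne]
    simp [h]
  · simp
  · rw [List.getD_eq_default _ _ (by simp; omega), if_neg h.ne']

theorem getD_ab (a b : α) (j : ℕ) : [a, b].getD (j % 2) b = if j % 2 = 0 then a else b := by
  rcases Nat.mod_two_eq_zero_or_one j with h | h <;> simp [h]

theorem getD_word (a b : α) {m : ℕ} (hm : m < n ^ 2 + n) :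
    (word n a b).getD m b = if IsA n m then a else b := by
  have hn : 1 ≤ n := by rcases n with _ | n <;> simp_all
  have hsq : n ^ 2 = (n - 1) * n + n := by
    obtain ⟨k, rfl⟩ := Nat.exists_eq_add_of_le' hn; simp; ring
  have hev := sq_sub_self_mod_two n
  have hblock : (wpow [b] (n - 1) ++ [a]).length = n := by simp; omega
  have hfirst : (wpow (wpow [b] (n - 1) ++ [a]) (n - 1)).length = (n - 1) * n := by
    rw [length_wpow, hblock]
  rw [word, List.append_assoc]
  rcases lt_or_ge m ((n - 1) * n) with h1 | h1
  · rw [List.getD_append _ _ _ _ (by omega), getD_wpow _ _ (by rwa [hblock]), hblock, getD_block]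
    have hA : IsA n m ↔ m % n = n - 1 := by unfold IsA; omega
    simp only [hA]
  rw [List.getD_append_right _ _ _ _ (by omega), hfirst]
  rcases lt_or_ge (m - (n - 1) * n) ((n - 1) * 2) with h2 | h2
  · rw [List.getD_append _ _ _ _ (by simpa using h2), getD_wpow _ _ (by simpa using h2)]
    rw [List.length_cons, List.length_singleton, getD_ab]
    have hA : IsA n m ↔ (m - (n - 1) * n) % 2 = 0 := by unfold IsA; omega
    simp only [hA]
  · rw [List.getD_append_right _ _ _ _ (by simpa using h2),
      if_pos (show IsA n m from Or.inr ⟨by omega, by omega⟩)]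
    simp only [length_wpow, List.length_cons]
    rcases (show m - (n - 1) * n - (n - 1) * 2 = 0 ∨ m - (n - 1) * n - (n - 1) * 2 = 1 by omega)
      with h | h <;> simp [h]

theorem periodic_isAInf (n : ℕ) : Function.Periodic (IsAInf n) (n ^ 2 + n) := by
  intro i
  simp [IsAInf]

end TheWord

section Occurrences

variable {n : ℕ}

theorem isAA_iff (hn : 3 ≤ n) (i : ℕ) :
    IsAA n i ↔ i % (n ^ 2 + n) = n ^ 2 - n - 1 ∨ i % (n ^ 2 + n) = n ^ 2 + n - 2 := by
  have hsq := three_mul_le_sq hn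
  have hlt := Nat.mod_lt i (show 0 < n ^ 2 + n by omega)
  have hlt' := Nat.mod_lt (i + 1) (show 0 < n ^ 2 + n by omega)
  have hev := sq_sub_self_mod_two n
  have hev' := sq_add_self_mod_two n
  have hr1 := sq_sub_self_sub_one_mod n
  unfold IsAA IsAInf IsA
  rcases add_mod_cases (i := i) (show 1 < n ^ 2 + n by omega) with h | h
  · rw [h]
    have hsucc : i % (n ^ 2 + n) % n = n - 1 → (i % (n ^ 2 + n) + 1) % n = 0 :=
      fun hr => add_mod_of_mod_eq_pred hr le_rfl (by omega)
    constructor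
    · omega
    · rintro (hr | hr) <;> rw [hr] <;> omega
  · have h0 : (i + 1) % (n ^ 2 + n) = 0 := by omega
    rw [h0, Nat.zero_mod]
    omega

theorem IsAA.shift (hn : 3 ≤ n) {i d : ℕ} (h : IsAA n i) (h' : IsAA n (i + d))
    (hd : d < n ^ 2 + n) :
    d = 0 ∨ (i % (n ^ 2 + n) = n ^ 2 - n - 1 ∧ d = 2 * n - 1) ∨
      (i % (n ^ 2 + n) = n ^ 2 + n - 2 ∧ d = n ^ 2 - n + 1) := by
  have hsq := three_mul_le_sq hn
  rw [isAA_iff hn] at h h'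
  rcases add_mod_cases (i := i) hd with e | e <;> omega

theorem exists_isAInf_near (hn : 3 ≤ n) (s : ℕ) :
    ∃ i, s ≤ i ∧ i < s + n ∧ IsAInf n i := by
  have hsq := three_mul_le_sq hn
  set r := s % (n ^ 2 + n)
  have hrN : r < n ^ 2 + n := Nat.mod_lt s (by omega)
  obtain ⟨d, hdn, hrd, hA⟩ : ∃ d < n, r + d < n ^ 2 + n ∧ IsA n (r + d) := by
    rcases lt_or_ge r (n ^ 2 - n) with h1 | h1
    · have hrn : r % n < n := Nat.mod_lt r (by omega)
      have hmod : (r + (n - 1 - r % n)) % n = n - 1 := by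
        rw [show r + (n - 1 - r % n) = n * (r / n) + (n - 1) by
          have := Nat.div_add_mod r n; omega, Nat.mul_add_mod, Nat.mod_eq_of_lt (by omega)]
      have hreg : r + (n - 1 - r % n) < n ^ 2 - n := by
        by_contra hge
        have : n ^ 2 - n - 1 = r + (n - 1 - r % n) :=
          Nat.ModEq.eq_of_abs_lt (m := n) (by rw [Nat.ModEq, hmod, sq_sub_self_sub_one_mod])
            (abs_lt.mpr ⟨by omega, by omega⟩)
        omega
      exact ⟨n - 1 - r % n, by omega, by omega, Or.inl ⟨hreg, hmod⟩⟩
    · by_cases hA : r % 2 = 0 ∨ r = n ^ 2 + n - 1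
      · exact ⟨0, by omega, by omega, Or.inr ⟨by omega, hA⟩⟩
      · have := sq_add_self_mod_two n
        exact ⟨1, by omega, by omega, Or.inr ⟨by omega, Or.inl (by omega)⟩⟩
  refine ⟨s + d, by omega, by omega, ?_⟩
  unfold IsAInf
  rcases add_mod_cases (i := s) (show d < n ^ 2 + n by omega) with e | e
  · rwa [e]
  · omega

theorem exists_isAA_near (hn : 3 ≤ n) (s : ℕ) :
    ∃ i, s ≤ i ∧ i ≤ s + (n ^ 2 - n) ∧ IsAA n i := by
  have hsq := three_mul_le_sq hn
  have hrN : s % (n ^ 2 + n) < n ^ 2 + n := Nat.mod_lt s (by omega)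
  obtain ⟨d, hd, hdN, hres⟩ : ∃ d ≤ n ^ 2 - n, d < n ^ 2 + n ∧
      ((s % (n ^ 2 + n) + d = n ^ 2 - n - 1 ∨ s % (n ^ 2 + n) + d = n ^ 2 + n - 2) ∨
        s % (n ^ 2 + n) + d = n ^ 2 + n + (n ^ 2 - n - 1)) := by
    rcases le_or_gt (s % (n ^ 2 + n)) (n ^ 2 - n - 1) with h1 | h1
    · exact ⟨n ^ 2 - n - 1 - s % (n ^ 2 + n), by omega, by omega, by omega⟩
    rcases le_or_gt (s % (n ^ 2 + n)) (n ^ 2 + n - 2) with h2 | h2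
    · exact ⟨n ^ 2 + n - 2 - s % (n ^ 2 + n), by omega, by omega, by omega⟩
    · exact ⟨n ^ 2 - n, le_rfl, by omega, by omega⟩
  refine ⟨s + d, by omega, by omega, (isAA_iff hn _).mpr ?_⟩
  have := Nat.mod_lt (s + d) (show 0 < n ^ 2 + n by omega)
  rcases add_mod_cases (i := s) hdN with e | e <;> omega

theorem isAInf_add (hn : 3 ≤ n) {i p : ℕ} (hp1 : 1 ≤ p) (hpn : p < n) (h : IsAInf n i)
    (h' : IsAInf n (i + p)) :
    i % (n ^ 2 + n) = n ^ 2 - n - 1 ∨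
      (n ^ 2 - n ≤ i % (n ^ 2 + n) ∧ i % (n ^ 2 + n) % 2 = 0 ∧
        (i + p) % (n ^ 2 + n) = i % (n ^ 2 + n) + p) := by
  have hsq := three_mul_le_sq hn
  unfold IsAInf IsA at h h'
  have hrN := Nat.mod_lt i (show 0 < n ^ 2 + n by omega)
  have hrpN := Nat.mod_lt (i + p) (show 0 < n ^ 2 + n by omega)
  rcases add_mod_cases (i := i) (show p < n ^ 2 + n by omega) with e | e
  · rw [e] at h' hrpN ⊢
    rcases h with ⟨h1, hrn⟩ | ⟨h1, h2⟩
    · left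
      have hrp := add_mod_of_mod_eq_pred hrn hp1 hpn
      refine Nat.ModEq.eq_of_abs_lt (m := n) ?_ (abs_lt.mpr ⟨by omega, by omega⟩)
      rw [Nat.ModEq, hrn, sq_sub_self_sub_one_mod]
    · omega
  · have hwrap : (i + p) % (n ^ 2 + n) < n - 1 := by omega
    rw [Nat.mod_eq_of_lt (show (i + p) % (n ^ 2 + n) < n by omega)] at h'
    omega

end Occurrences

section Windows

variable {n p s : ℕ}

theorem PeriodicOn.isAA_add_iff {L i : ℕ} (h : PeriodicOn (IsAInf n) p s L) (hi : s ≤ i)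
    (hi' : i + 1 + p < s + L) : IsAA n (i + p) ↔ IsAA n i := by
  unfold IsAA
  rw [h i hi (by omega), Nat.add_right_comm, h (i + 1) (by omega) hi']

theorem PeriodicFrom.isAA_add_iff {i : ℕ} (h : PeriodicFrom (IsAInf n) p s) (hi : s ≤ i) :
    IsAA n (i + p) ↔ IsAA n i := by
  unfold IsAA
  rw [h i hi, Nat.add_right_comm, h (i + 1) (by omega)]

theorem not_isAA_of_periodicOn (hn : 3 ≤ n) (hp1 : 1 ≤ p) (hp : p ≤ n + 2)
    (h35 : ¬(n = 3 ∧ p = 5)) (hper : PeriodicOn (IsAInf n) p s (n * p)) {i : ℕ} (hi : s ≤ i)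
    (hi' : i + 1 < s + n * p) : ¬IsAA n i := by
  intro haa
  have hsq := three_mul_le_sq hn
  have h3p : 3 * p ≤ n * p := Nat.mul_le_mul_right p hn
  obtain ⟨j, hj, hj'⟩ : ∃ j, IsAA n j ∧ IsAA n (j + p) := by
    rcases lt_or_ge (i + 1 + p) (s + n * p) with hc | hc
    · exact ⟨i, haa, (hper.isAA_add_iff hi hc).mpr haa⟩
    · refine ⟨i - p, (hper.isAA_add_iff (by omega) (by omega)).mp ?_, ?_⟩ <;>
        rwa [Nat.sub_add_cancel (by omega)]
  rcases hj.shift hn hj' (by omega) with h | ⟨-, h⟩ | ⟨-, h⟩ <;> omega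

theorem exists_isAInf_of_periodicOn (hn : 3 ≤ n) (hp1 : 1 ≤ p)
    (hper : PeriodicOn (IsAInf n) p s (n * p)) : ∃ i, s ≤ i ∧ i < s + p ∧ IsAInf n i := by
  have hnp : n ≤ n * p := Nat.le_mul_of_pos_right n hp1
  obtain ⟨i₀, hi₀, hi₀', hA₀⟩ := exists_isAInf_near hn s
  refine ⟨s + (i₀ - s) % p, by omega, by have := Nat.mod_lt (i₀ - s) hp1; omega, ?_⟩
  have hdiv := Nat.mod_add_div' (i₀ - s) p
  rwa [← hper.apply_add_mul (by omega) (j := (i₀ - s) / p) (by omega),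
    Nat.add_assoc, hdiv, Nat.add_sub_cancel' hi₀]

theorem eq_two_of_periodicOn_of_lt (hn : 3 ≤ n) (hp1 : 1 ≤ p) (hpn : p < n)
    (hper : PeriodicOn (IsAInf n) p s (n * p))
    (hfree : ∀ i, s ≤ i → i + 1 < s + n * p → ¬IsAA n i) {i : ℕ} (hi : s ≤ i)
    (hip : i < s + p) (hiA : IsAInf n i) : p = 2 ∧ i % (n ^ 2 + n) = n ^ 2 - n := by
  have hsq := three_mul_le_sq hn
  have hmul : ∀ j, j < n → j * p + p ≤ n * p := fun j hj => by
    rw [← Nat.succ_mul]; exact Nat.mul_le_mul_right p hj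
  have hchain : ∀ j, j < n → IsAInf n (i + j * p) := fun j hj => by
    rwa [hper.apply_add_mul hi (by have := hmul j hj; omega)]
  have hstep : ∀ j, j + 1 < n → n ^ 2 - n ≤ (i + j * p) % (n ^ 2 + n) ∧
      (i + j * p) % (n ^ 2 + n) % 2 = 0 ∧
      (i + (j + 1) * p) % (n ^ 2 + n) = (i + j * p) % (n ^ 2 + n) + p := by
    intro j hj
    have hA' := hchain (j + 1) hj
    rw [Nat.succ_mul, ← Nat.add_assoc] at hA' ⊢
    rcases isAInf_add hn hp1 hpn (hchain j (by omega)) hA' with hr1 | h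
    · exact absurd ((isAA_iff hn _).mpr (Or.inl hr1))
        (hfree _ (by omega) (by have := hmul (j + 1) hj; rw [Nat.succ_mul] at this; omega))
    · exact h
  have hlin : ∀ j, j < n → (i + j * p) % (n ^ 2 + n) = i % (n ^ 2 + n) + j * p := by
    intro j
    induction j with
    | zero => simp
    | succ j ih => intro hj; rw [(hstep j hj).2.2, ih (by omega), Nat.succ_mul, Nat.add_assoc]
  have h0 := hstep 0 (by omega)
  have h1 := hstep 1 (by omega)
  have hlast := hlin (n - 1) (by omega)
  have hlastN := Nat.mod_lt (i + (n - 1) * p) (show 0 < n ^ 2 + n by omega)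
  simp only [Nat.zero_mul, Nat.zero_add, Nat.add_zero, Nat.one_mul] at h0 h1
  have hp2 : p = 2 := by
    by_contra hp2
    have := Nat.mul_le_mul_left (n - 1) (show 3 ≤ p by omega)
    omega
  subst hp2
  have := sq_sub_self_mod_two n
  exact ⟨rfl, by omega⟩

theorem not_periodicOn_of_lt (hn : 3 ≤ n) (hp1 : 1 ≤ p) (hpn : p < n)
    (hfree : ∀ i, s ≤ i → i + 1 < s + n * p → ¬IsAA n i) :
    ¬PeriodicOn (IsAInf n) p s (n * p) := by
  intro hper
  have hsq := three_mul_le_sq hn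
  obtain ⟨i, hi, hip, hiA⟩ := exists_isAInf_of_periodicOn hn hp1 hper
  obtain ⟨rfl, hr⟩ := eq_two_of_periodicOn_of_lt hn hp1 hpn hper hfree hi hip hiA
  rcases (show i = s ∨ i = s + 1 by omega) with rfl | rfl
  · have := Nat.mod_lt (i + (n - 1) * 2) (show 0 < n ^ 2 + n by omega)
    have hend : (i + (n - 1) * 2) % (n ^ 2 + n) = n ^ 2 + n - 2 := by
      rcases add_mod_cases (i := i) (show (n - 1) * 2 < n ^ 2 + n by omega) with e | e <;> omega
    exact hfree _ (by omega) (by omega) ((isAA_iff hn _).mpr (Or.inr hend))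
  · have := Nat.mod_lt s (show 0 < n ^ 2 + n by omega)
    rcases add_mod_cases (i := s) (show 1 < n ^ 2 + n by omega) with e | e
    · exact hfree s le_rfl (by omega) ((isAA_iff hn _).mpr (Or.inl (by omega)))
    · omega

theorem not_periodicOn_three_five : ¬PeriodicOn (IsAInf 3) 5 s (3 * 5) := by
  intro hper
  obtain ⟨i, hi, hi', hmod⟩ : ∃ i, s ≤ i ∧ i < s + 12 ∧ i % 12 = 0 :=
    ⟨s + (12 - s % 12) % 12, by omega, by omega, by omega⟩
  have hletter : ∀ j m, j % 12 = m → (IsAInf 3 j ↔ IsA 3 m) := by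
    intro j m hj; rw [IsAInf, show 3 ^ 2 + 3 = 12 from rfl, hj]
  rcases le_or_gt (s + 4) i with hc | hc
  · have e := hper (i - 4) (by omega) (by omega)
    rw [show i - 4 + 5 = i + 1 by omega] at e
    rw [eq_iff_iff, hletter _ 1 (by omega), hletter _ 8 (by omega)] at e
    exact absurd e (by decide)
  · have e := hper i hi (by omega)
    rw [eq_iff_iff, hletter _ 5 (by omega), hletter _ 0 (by omega)] at e
    exact absurd e (by decide)

theorem not_periodicOn_of_le (hn : 3 ≤ n) (hp1 : 1 ≤ p) (hp : p ≤ n + 2) :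
    ¬PeriodicOn (IsAInf n) p s (n * p) := by
  intro hper
  by_cases h35 : n = 3 ∧ p = 5
  · obtain ⟨rfl, rfl⟩ := h35
    exact not_periodicOn_three_five hper
  have hfree := fun i hi hi' => not_isAA_of_periodicOn hn hp1 hp h35 hper (i := i) hi hi'
  rcases lt_or_ge p n with hpn | hpn
  · exact not_periodicOn_of_lt hn hp1 hpn hfree hper
  · obtain ⟨i, hi, hi', haa⟩ := exists_isAA_near hn s
    have := Nat.mul_le_mul_left n hpn
    have := three_mul_le_sq hn
    exact hfree i hi (by rw [sq] at *; omega) haa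

theorem dvd_of_periodicOn_of_ge (hn : 3 ≤ n) (hp : n + 3 ≤ p)
    (hper : PeriodicOn (IsAInf n) p s (n * p)) : n ^ 2 + n ∣ p := by
  have hsq := three_mul_le_sq hn
  have hN : 0 < n ^ 2 + n := by omega
  have hg := (hper.periodicFrom (periodic_isAInf n) hN (by nlinarith)).gcd (periodic_isAInf n)
  by_contra hndvd
  have hglt : p.gcd (n ^ 2 + n) < n ^ 2 + n :=
    lt_of_le_of_ne (Nat.le_of_dvd hN (Nat.gcd_dvd_right _ _))
      fun h => hndvd (h ▸ Nat.gcd_dvd_left p (n ^ 2 + n))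
  have hshift : ∀ r, (r = n ^ 2 - n - 1 ∨ r = n ^ 2 + n - 2) →
      ∃ i, i % (n ^ 2 + n) = r ∧ IsAA n i ∧ IsAA n (i + p.gcd (n ^ 2 + n)) := by
    intro r hr
    have hi : s ≤ s * (n ^ 2 + n) + r := le_add_right (Nat.le_mul_of_pos_right s hN)
    have hmod : (s * (n ^ 2 + n) + r) % (n ^ 2 + n) = r := by
      rw [Nat.mul_add_mod', Nat.mod_eq_of_lt (by omega)]
    have haa : IsAA n (s * (n ^ 2 + n) + r) := (isAA_iff hn _).mpr (by rwa [hmod])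
    exact ⟨_, hmod, haa, (hg.isAA_add_iff hi).mpr haa⟩
  obtain ⟨i₁, hi₁, h₁, h₁'⟩ := hshift _ (Or.inl rfl)
  obtain ⟨i₂, hi₂, h₂, h₂'⟩ := hshift _ (Or.inr rfl)
  have := Nat.gcd_pos_of_pos_right p hN
  rcases h₁.shift hn h₁' hglt with _ | _ | _ <;>
    rcases h₂.shift hn h₂' hglt with _ | _ | _ <;> omega

theorem dvd_of_periodicOn (hn : 3 ≤ n) (hper : PeriodicOn (IsAInf n) p s (n * p)) :
    n ^ 2 + n ∣ p := by
  rcases Nat.eq_zero_or_pos p with rfl | hp0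
  · exact dvd_zero _
  rcases le_or_gt p (n + 2) with hp | hp
  · exact (not_periodicOn_of_le hn hp0 hp hper).elim
  · exact dvd_of_periodicOn_of_ge hn hp hper

end Windows

theorem periodicOn_isAInf_of_append_eq {n k : ℕ} {a b : α} (hab : a ≠ b) (hn : 1 ≤ n)
    {x u y : List α} (h : x ++ wpow u n ++ y = wpow (word n a b) k) :
    PeriodicOn (IsAInf n) u.length x.length (n * u.length) := by
  have hN : 0 < n ^ 2 + n := by positivity
  have hletter : ∀ i, i < k * (n ^ 2 + n) →
      (wpow (word n a b) k).getD i b = if IsA n (i % (n ^ 2 + n)) then a else b := by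
    intro i hi
    rw [getD_wpow _ _ (by rwa [length_word a b hn]), length_word a b hn,
      getD_word a b (Nat.mod_lt _ hN)]
  have hlen : x.length + n * u.length ≤ k * (n ^ 2 + n) := by
    have := congrArg List.length h
    simp only [List.length_append, length_wpow, length_word a b hn] at this
    omega
  intro i hi hip
  have e := periodicOn_getD_append_wpow_append x u y n b i hi hip
  simp only [h] at e
  rw [hletter _ (by omega), hletter _ (by omega)] at e
  unfold IsAInf
  by_cases h₁ : IsA n ((i + u.length) % (n ^ 2 + n)) <;>
    by_cases h₂ : IsA n (i % (n ^ 2 + n)) <;> simp_all [eq_comm]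

end PowerInWordPower

open PowerInWordPower in
theorem stmt8 {A : Type*} (a b : A) (hab : a ≠ b) (n : ℕ) (hn : 3 ≤ n)
    (w : List A)
    (hw : w = wpow (wpow [b] (n - 1) ++ [a]) (n - 1) ++ wpow [a, b] (n - 1) ++ [a, a])
    (x u y : List A) (k : ℕ)
    (h : x ++ wpow u n ++ y = wpow w k) :
    (n ^ 2 + n) ∣ u.length ∧ ∃ m : ℕ, x ++ y = wpow w m := by
  rw [show w = word n a b from hw] at h ⊢
  obtain ⟨t, ht⟩ := dvd_of_periodicOn hn (periodicOn_isAInf_of_append_eq hab (by omega) h)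
  refine ⟨⟨t, ht⟩, k - n * t, append_eq_wpow_sub h ?_⟩
  rw [length_wpow, ht, length_word a b (by omega)]
  ring
end

section
/- Let $M$ be a finite monoid and for $s \in M$ let $s^{\omega}$ denote the unique idempotent power of $s$. Assume $M$ satisfies $(s t^{\omega})^{\omega} = (t^{\omega} s)^{\omega}$ for all $s, t \in M$. Then for all $x, y, z \in M$: $(x y^{\omega} z)^{\omega} \cdot x y^{\omega} z = (x y^{\omega} z)^{\omega} \cdot x z$, and consequently $(x y^{\omega} z)^{\omega} = (x y^{\omega} z)^{\omega} (xz)^{\omega} = (xz)^{\omega}(x y^{\omega} z)^{\omega}$. -/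
section aux

variable {M : Type*} [Monoid M]

private lemma idem_pow_eq {w : M} (h : IsIdempotentElem w) {j : ℕ} (hj : 1 ≤ j) :
    w ^ j = w := by
  obtain ⟨i, rfl⟩ := Nat.exists_eq_add_of_le hj
  rw [Nat.add_comm]
  exact h.pow_succ_eq i

private lemma keyA (e z a x u : M) (hu : x * e * z = u) (ha : a * a = a)
    (hc : ∀ m : ℕ, a * u ^ m = u ^ m * a) :
    ∀ m : ℕ, (e * z * a * x) ^ (m + 1) = e * z * a * u ^ m * x := by
  have hxez : ∀ p : M, p * x * e * z = p * u := fun p => by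
    rw [mul_assoc p x e, mul_assoc p (x*e) z, hu]
  intro m
  induction m with
  | zero => simp
  | succ m ih =>
    rw [pow_succ, ih]
    simp only [← mul_assoc]
    rw [hxez (e*z*a*u^m), mul_assoc (e*z*a) (u^m) u, ← pow_succ,
      mul_assoc (e*z) a (u^(m+1)), hc (m+1), ← mul_assoc (e*z) (u^(m+1)) a,
      mul_assoc ((e*z)*u^(m+1)) a a, ha,
      mul_assoc (e*z) (u^(m+1)) a, ← hc (m+1), ← mul_assoc]

private lemma keyB (e z a x u : M) (hu : x * e * z = u) (ha : a * a = a)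
    (hc : ∀ m : ℕ, a * u ^ m = u ^ m * a) :
    ∀ m : ℕ, (z * a * x * e) ^ (m + 1) = z * a * u ^ m * x * e := by
  have hxez : ∀ p : M, p * x * e * z = p * u := fun p => by
    rw [mul_assoc p x e, mul_assoc p (x*e) z, hu]
  intro m
  induction m with
  | zero => simp
  | succ m ih =>
    rw [pow_succ, ih]
    simp only [← mul_assoc]
    -- z*a*u^m*x*e*z*a*x*e = z*a*u^(m+1)*x*e
    rw [hxez (z*a*u^m), mul_assoc (z*a) (u^m) u, ← pow_succ,
      mul_assoc z a (u^(m+1)), hc (m+1), ← mul_assoc z (u^(m+1)) a,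
      mul_assoc (z*u^(m+1)) a a, ha,
      mul_assoc z (u^(m+1)) a, ← hc (m+1), ← mul_assoc]

end aux

theorem stmt10 {M : Type*} [Monoid M] [Finite M]
    (ω : M → M) (hω : ∀ s : M, IsIdempotentElem (ω s) ∧ ∃ k, 1 ≤ k ∧ ω s = s ^ k)
    (hBG : ∀ s t : M, ω (s * ω t) = ω (ω t * s)) :
    ∀ x y z : M,
      ω (x * ω y * z) * (x * ω y * z) = ω (x * ω y * z) * (x * z) ∧
      ω (x * ω y * z) = ω (x * ω y * z) * ω (x * z) ∧
      ω (x * ω y * z) = ω (x * z) * ω (x * ω y * z) := by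
  intro x y z
  obtain ⟨he, -⟩ := hω y
  obtain ⟨ha, k, hk, hak⟩ := hω (x * ω y * z)
  set e := ω y with hedef
  set u := x * e * z with hudef
  set a := ω u with hadef
  -- commutation of a with powers of u
  have hcu : ∀ m : ℕ, a * u ^ m = u ^ m * a := by
    intro m; rw [hak, ← pow_add, ← pow_add, Nat.add_comm]
  have hcu1 : a * u = u * a := by simpa using hcu 1
  -- the idempotent f
  have hb := hBG (z * a * x) y
  rw [← hedef] at hb
  have harg : e * (z * a * x) = e * z * a * x := by simp only [mul_assoc]
  rw [harg] at hb
  obtain ⟨hfi, n1, hn1, hf1⟩ := hω (e * z * a * x)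
  obtain ⟨-, n2, hn2, hf2⟩ := hω (z * a * x * e)
  set f := ω (e * z * a * x) with hfdef
  rw [hb] at hf2
  -- hf2 : f = (z*a*x*e)^n2
  set N := k * n1 * n2 with hNdef
  have hpm : ∀ {p q : ℕ}, 1 ≤ p → 1 ≤ q → 1 ≤ p * q := fun hp hq =>
    Nat.one_le_iff_ne_zero.mpr (Nat.mul_ne_zero (by omega) (by omega))
  have hN1 : 1 ≤ N := hpm (hpm hk hn1) hn2
  have huN : u ^ N = a := by
    rw [show N = k * (n1 * n2) by ring, pow_mul, ← hak,
      idem_pow_eq ha (hpm hn1 hn2)]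
  have hfN1 : (e * z * a * x) ^ N = f := by
    rw [show N = n1 * (k * n2) by ring, pow_mul, ← hf1,
      idem_pow_eq hfi (hpm hk hn2)]
  have hfN2 : (z * a * x * e) ^ N = f := by
    rw [show N = n2 * (k * n1) by ring, pow_mul, ← hf2,
      idem_pow_eq hfi (hpm hk hn1)]
  obtain ⟨N', hN'⟩ : ∃ N', N = N' + 1 := ⟨N - 1, by omega⟩
  have hfA : f = e * z * a * u ^ N' * x := by
    rw [← hfN1, hN', keyA e z a x u hudef.symm ha.eq hcu]
  have hfB : f = z * a * u ^ N' * x * e := by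
    rw [← hfN2, hN', keyB e z a x u hudef.symm ha.eq hcu]
  -- key equations
  have hxf : x * f = a * x := by
    rw [hfA]
    simp only [← mul_assoc]
    rw [← hudef, ← hcu1, mul_assoc a u (u ^ N'), ← pow_succ', ← hN', huN,
      mul_assoc, ← mul_assoc, ha.eq]
  have hfz : f * z = z * a := by
    rw [hfB, mul_assoc (z * a * u ^ N') x e, mul_assoc (z * a * u ^ N') (x * e) z,
      ← hudef, mul_assoc (z * a) (u ^ N') u, ← pow_succ, ← hN', huN,
      mul_assoc z a a, ha.eq]
  have hfe : f * e = f := by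
    rw [hfB, mul_assoc (z * a * u ^ N' * x) e e, he.eq, ← hfB]
  -- part 1
  have h1 : a * u = x * z * a := by
    rw [hudef]
    simp only [← mul_assoc]
    rw [← hxf, mul_assoc x f e, hfe, mul_assoc x f z, hfz, ← mul_assoc]
  have h2 : a * (x * z) = x * z * a := by
    rw [← mul_assoc a x z, ← hxf, mul_assoc x f z, hfz, ← mul_assoc]
  have goal1 : a * u = a * (x * z) := h1.trans h2.symm
  refine ⟨goal1, ?_, ?_⟩
  all_goals {
    obtain ⟨hbi, l, hl, hbl⟩ := hω (x * z)
    have hCu : Commute a u := hcu1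
    have hCv : Commute a (x * z) := h2
    have hkey : ∀ m : ℕ, 1 ≤ m → a * u ^ m = a * (x * z) ^ m := by
      intro m hm
      have h4 : a ^ m = a := idem_pow_eq ha hm
      calc a * u ^ m = a ^ m * u ^ m := by rw [h4]
        _ = (a * u) ^ m := (hCu.mul_pow m).symm
        _ = (a * (x * z)) ^ m := by rw [goal1]
        _ = a ^ m * (x * z) ^ m := hCv.mul_pow m
        _ = a * (x * z) ^ m := by rw [h4]
    have havk : a * (x * z) ^ k = a := by
      rw [← hkey k hk, ← hak, ha.eq]
    have hstep : ∀ j : ℕ, a * ((x * z) ^ k) ^ j = a := by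
      intro j
      induction j with
      | zero => simp
      | succ j ih => rw [pow_succ, ← mul_assoc, ih, havk]
    have hbform : ω (x * z) = ((x * z) ^ k) ^ l := by
      rw [← pow_mul, show k * l = l * k from Nat.mul_comm k l, pow_mul, ← hbl]
      exact (idem_pow_eq hbi hk).symm
    have hab : a * ω (x * z) = a := by rw [hbform]; exact hstep l
    have hCb : Commute a (ω (x * z)) := by
      rw [hbform]; exact (hCv.pow_right k).pow_right l
    first
      | exact hab.symm
      | · rw [← hCb.eq]; exact hab.symm
  }
end

section
/- Let $M$ be a finite monoid with idempotent powers $s^{\omega}$, and let $n \geq 1$. Assume $M$ satisfies $(x y^{\omega} z)^{\omega} \cdot x y^{\omega} z = (x y^{n} z)^{\omega} \cdot x y^{n} z$ for all $x,y,z \in M$, and also $(s t^{\omega})^{\omega} = (t^{\omega} s)^{\omega}$ for all $s,t$. Then $M$ satisfies $y^{\omega} y^{n} = y^{\omega}$ and $(x y^{n})^{\omega} = (y^{n} x)^{\omega}$ for all $x, y \in M$. -/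
lemma idem_pow_eq_s11 {M : Type*} [Monoid M] {a : M} (h : IsIdempotentElem a) :
    ∀ k, 1 ≤ k → a ^ k = a := by
  intro k hk
  induction k with
  | zero => omega
  | succ m ih =>
    rcases Nat.lt_or_ge 1 (m + 1) with h1 | h1
    · have hm : 1 ≤ m := by omega
      rw [pow_succ, ih hm, h]
    · have : m = 0 := by omega
      simp [this]

theorem stmt11 {M : Type*} [Monoid M] [Finite M] (n : ℕ) (hn : 1 ≤ n)
    (ω : M → M) (hω : ∀ s : M, IsIdempotentElem (ω s) ∧ ∃ k, 1 ≤ k ∧ ω s = s ^ k)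
    (hW : ∀ x y z : M,
      ω (x * ω y * z) * (x * ω y * z) = ω (x * y ^ n * z) * (x * y ^ n * z))
    (hBG : ∀ s t : M, ω (s * ω t) = ω (ω t * s)) :
    ∀ x y : M, ω y * y ^ n = ω y ∧ ω (x * y ^ n) = ω (y ^ n * x) := by
  -- any idempotent power of u with exponent ≥ 1 equals ω u
  have key : ∀ u : M, ∀ m, 1 ≤ m → IsIdempotentElem (u ^ m) → u ^ m = ω u := by
    intro u m hm hid
    obtain ⟨hidω, k, hk, hωk⟩ := hω u
    rw [hωk] at hidω ⊢
    calc u ^ m = (u ^ m) ^ k := (idem_pow_eq_s11 hid k hk).symm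
      _ = (u ^ k) ^ m := by rw [← pow_mul, Nat.mul_comm, pow_mul]
      _ = u ^ k := idem_pow_eq_s11 hidω m hm
  have ωpow : ∀ u : M, ∀ m, 1 ≤ m → ω (u ^ m) = ω u := by
    intro u m hm
    obtain ⟨hid, k, hk, hk'⟩ := hω (u ^ m)
    rw [hk', ← pow_mul] at hid ⊢
    exact key u (m * k) (Nat.one_le_iff_ne_zero.mpr (by positivity)) hid
  have ωω : ∀ u : M, ω (ω u) = ω u := by
    intro u
    obtain ⟨hid, k, hk, hk'⟩ := hω u
    calc ω (ω u) = ω (u ^ k) := by rw [hk']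
      _ = ω u := ωpow u k hk
  have ωabs : ∀ u : M, ω (ω u * u) = ω u := by
    intro u
    obtain ⟨hid, k, hk, hk'⟩ := hω u
    calc ω (ω u * u) = ω (u ^ (k + 1)) := by rw [hk', pow_succ]
      _ = ω u := ωpow u (k + 1) (by omega)
  intro x y
  obtain ⟨hidy, _⟩ := hω y
  have h1 : ω (ω y) * ω y = ω (y ^ n) * y ^ n := by
    have := hW 1 y 1
    simpa using this
  rw [ωω, ωpow y n hn, hidy] at h1
  constructor
  · exact h1.symm
  · have h2 : ω (x * ω y) = ω (x * y ^ n) := by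
      have e := hW x y 1
      simp only [mul_one] at e
      have := congrArg ω e
      rwa [ωabs, ωabs] at this
    have h3 : ω (ω y * x) = ω (y ^ n * x) := by
      have e := hW 1 y x
      simp only [one_mul] at e
      have := congrArg ω e
      rwa [ωabs, ωabs] at this
    rw [← h2, ← h3, hBG]
end

section
/- Let $M$ be a finite monoid with idempotent powers $s^{\omega}$, and let $n \geq 1$. Assume $M$ satisfies $s^{\omega} s^{n} = s^{\omega}$ and $(x y^{n})^{\omega} = (y^{n} x)^{\omega}$ for all $x, y, s \in M$. Then $M$ satisfies $(x y^{\omega})^{\omega} = (y^{n} x)^{\omega}$ for all $x, y \in M$. -/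
theorem stmt12 {M : Type*} [Monoid M] [Finite M] (n : ℕ) (hn : 1 ≤ n)
    (ω : M → M) (hω : ∀ s : M, IsIdempotentElem (ω s) ∧ ∃ k, 1 ≤ k ∧ ω s = s ^ k)
    (h1 : ∀ s : M, ω s * s ^ n = ω s)
    (h2 : ∀ x y : M, ω (x * y ^ n) = ω (y ^ n * x)) :
    ∀ x y : M, ω (x * ω y) = ω (y ^ n * x) := by
  classical
  cases nonempty_fintype M
  have hIdemPow : ∀ a : M, a * a = a → ∀ j : ℕ, a ^ (j + 1) = a := by
    intro a ha j
    induction j with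
    | zero => simp
    | succ j ih => rw [pow_succ, ih, ha]
  choose k hk1 hk2 using fun s => (hω s).2
  obtain ⟨N, hN1, hωN⟩ : ∃ N, 1 ≤ N ∧ ∀ s : M, ω s = s ^ N := by
    refine ⟨∏ s : M, k s, Finset.one_le_prod' fun s _ => hk1 s, fun s => ?_⟩
    have hsplit : (∏ t : M, k t) = k s * ∏ t ∈ Finset.univ.erase s, k t :=
      (Finset.mul_prod_erase Finset.univ k (Finset.mem_univ s)).symm
    have hm1 : 1 ≤ ∏ t ∈ Finset.univ.erase s, k t :=
      Finset.one_le_prod' fun t _ => hk1 t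
    obtain ⟨m, hm⟩ : ∃ m, (∏ t ∈ Finset.univ.erase s, k t) = m + 1 :=
      ⟨_ - 1, (Nat.succ_pred_eq_of_pos hm1).symm⟩
    rw [hsplit, hm, pow_mul, ← hk2 s, hIdemPow _ (hω s).1 m]
  obtain ⟨p, hp⟩ : ∃ p, n = p + 1 := ⟨n - 1, (Nat.succ_pred_eq_of_pos hn).symm⟩
  obtain ⟨Nm, hNm⟩ : ∃ m, N = m + 1 := ⟨N - 1, (Nat.succ_pred_eq_of_pos hN1).symm⟩
  have hidem : ∀ s : M, s ^ N * s ^ N = s ^ N := by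
    intro s; have := (hω s).1; rwa [hωN s] at this
  have habs : ∀ s : M, s ^ N * s ^ n = s ^ N := by
    intro s; have := h1 s; rwa [hωN s] at this
  have habs' : ∀ s : M, s ^ n * s ^ N = s ^ N := by
    intro s; rw [← pow_add, add_comm, pow_add, habs]
  have hpeel : ∀ a : M, a ^ N = a ^ Nm * a := fun a => by rw [hNm, pow_succ]
  have hpeelN : ∀ a : M, a ^ n = a ^ p * a := fun a => by rw [hp, pow_succ]
  have hconj : ∀ (a b : M) (j : ℕ), (a * b) ^ j * a = a * (b * a) ^ j := by
    intro a b j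
    induction j with
    | zero => simp
    | succ j ih =>
      calc (a * b) ^ (j + 1) * a = (a * b) * ((a * b) ^ j * a) := by
            rw [pow_succ']; simp only [mul_assoc]
        _ = (a * b) * (a * (b * a) ^ j) := by rw [ih]
        _ = a * (b * a) ^ (j + 1) := by rw [pow_succ']; simp only [mul_assoc]
  intro x y
  -- basic facts about z = y^N
  have hzz : y ^ N * y ^ N = y ^ N := hidem y
  have hzyn : y ^ N * y ^ n = y ^ N := habs y
  have hynz : y ^ n * y ^ N = y ^ N := habs' y
  have hzn : (y ^ N) ^ n = y ^ N := by rw [hp]; exact hIdemPow _ hzz p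
  have hynN : (y ^ n) ^ N = y ^ N := by
    rw [← pow_mul, Nat.mul_comm n N, pow_mul, hzn]
  -- f = (y^n x)^N facts
  have hf2 : (x * y ^ n) ^ N = (y ^ n * x) ^ N := by
    have := h2 x y; rwa [hωN, hωN] at this
  have hfx : (y ^ n * x) ^ N * x = x * (y ^ n * x) ^ N := by
    have := hconj x (y ^ n) N; rwa [hf2] at this
  have hfyn : (y ^ n * x) ^ N * y ^ n = y ^ n * (y ^ n * x) ^ N := by
    have := hconj (y ^ n) x N; rwa [hf2] at this
  have hCfx : Commute ((y ^ n * x) ^ N) x := hfx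
  have hCfyn : Commute ((y ^ n * x) ^ N) (y ^ n) := hfyn
  have hCfz : Commute ((y ^ n * x) ^ N) (y ^ N) := by
    have := hCfyn.pow_right N; rwa [hynN] at this
  -- e = (y^N x)^N facts
  have he2 : (x * y ^ N) ^ N = (y ^ N * x) ^ N := by
    have := h2 x (y ^ N); rw [hzn] at this; rwa [hωN, hωN] at this
  have hex : (y ^ N * x) ^ N * x = x * (y ^ N * x) ^ N := by
    have := hconj x (y ^ N) N; rwa [he2] at this
  have hCex : Commute ((y ^ N * x) ^ N) x := hex
  have heyn : (y ^ N * x) ^ N * y ^ n = (y ^ N * x) ^ N := by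
    have key : (x * y ^ N) ^ N * y ^ n = (x * y ^ N) ^ N := by
      calc (x * y ^ N) ^ N * y ^ n
          = (x * y ^ N) ^ Nm * (x * (y ^ N * y ^ n)) := by
            rw [hpeel (x * y ^ N)]; simp only [mul_assoc]
        _ = (x * y ^ N) ^ Nm * (x * y ^ N) := by rw [hzyn]
        _ = (x * y ^ N) ^ N := by rw [hpeel (x * y ^ N)]
    rw [he2] at key; exact key
  -- step 5 : z * f = f
  have hcn_split : (y ^ n * x) ^ n = y ^ n * ((x * y ^ n) ^ p * x) := by
    calc (y ^ n * x) ^ n = (y ^ n * x) ^ p * (y ^ n * x) := hpeelN _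
      _ = ((y ^ n * x) ^ p * y ^ n) * x := by rw [← mul_assoc]
      _ = (y ^ n * (x * y ^ n) ^ p) * x := by rw [hconj (y ^ n) x p]
      _ = y ^ n * ((x * y ^ n) ^ p * x) := by rw [mul_assoc]
  have hstep5 : (y ^ n * x) ^ N
      = y ^ n * (y ^ n * x) ^ N * ((x * y ^ n) ^ p * x) := by
    calc (y ^ n * x) ^ N = (y ^ n * x) ^ N * (y ^ n * x) ^ n := (habs _).symm
      _ = (y ^ n * x) ^ N * (y ^ n * ((x * y ^ n) ^ p * x)) := by rw [hcn_split]
      _ = ((y ^ n * x) ^ N * y ^ n) * ((x * y ^ n) ^ p * x) := by rw [← mul_assoc]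
      _ = (y ^ n * (y ^ n * x) ^ N) * ((x * y ^ n) ^ p * x) := by rw [hfyn]
  have hiter5 : ∀ j : ℕ, (y ^ n * x) ^ N
      = (y ^ n) ^ j * (y ^ n * x) ^ N * ((x * y ^ n) ^ p * x) ^ j := by
    intro j
    induction j with
    | zero => simp
    | succ j ih =>
      calc (y ^ n * x) ^ N
          = (y ^ n) ^ j * (y ^ n * x) ^ N * ((x * y ^ n) ^ p * x) ^ j := ih
        _ = (y ^ n) ^ j * (y ^ n * (y ^ n * x) ^ N * ((x * y ^ n) ^ p * x))
              * ((x * y ^ n) ^ p * x) ^ j := by rw [← hstep5]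
        _ = ((y ^ n) ^ j * y ^ n) * (y ^ n * x) ^ N
              * (((x * y ^ n) ^ p * x) * ((x * y ^ n) ^ p * x) ^ j) := by
            simp only [mul_assoc]
        _ = (y ^ n) ^ (j + 1) * (y ^ n * x) ^ N
              * ((x * y ^ n) ^ p * x) ^ (j + 1) := by
            rw [pow_succ, pow_succ']
  have hzf : y ^ N * (y ^ n * x) ^ N = (y ^ n * x) ^ N := by
    have h5 : (y ^ n * x) ^ N
        = y ^ N * (y ^ n * x) ^ N * ((x * y ^ n) ^ p * x) ^ N := by
      have := hiter5 N; rwa [hynN] at this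
    calc y ^ N * (y ^ n * x) ^ N
        = y ^ N * (y ^ N * (y ^ n * x) ^ N * ((x * y ^ n) ^ p * x) ^ N) := by
          rw [← h5]
      _ = (y ^ N * y ^ N) * (y ^ n * x) ^ N * ((x * y ^ n) ^ p * x) ^ N := by
          simp only [mul_assoc]
      _ = y ^ N * (y ^ n * x) ^ N * ((x * y ^ n) ^ p * x) ^ N := by rw [hzz]
      _ = (y ^ n * x) ^ N := h5.symm
  have hfz : (y ^ n * x) ^ N * y ^ N = (y ^ n * x) ^ N := by
    rw [hCfz.eq, hzf]
  -- step 6 : f * x^N = f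
  have hcn_split2 : (y ^ n * x) ^ n = ((y ^ n * x) ^ p * y ^ n) * x := by
    calc (y ^ n * x) ^ n = (y ^ n * x) ^ p * (y ^ n * x) := hpeelN _
      _ = ((y ^ n * x) ^ p * y ^ n) * x := by rw [← mul_assoc]
  have hstep6 : (y ^ n * x) ^ N
      = ((y ^ n * x) ^ p * y ^ n) * (y ^ n * x) ^ N * x := by
    calc (y ^ n * x) ^ N = (y ^ n * x) ^ n * (y ^ n * x) ^ N := (habs' _).symm
      _ = (((y ^ n * x) ^ p * y ^ n) * x) * (y ^ n * x) ^ N := by rw [hcn_split2]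
      _ = ((y ^ n * x) ^ p * y ^ n) * (x * (y ^ n * x) ^ N) := by rw [mul_assoc]
      _ = ((y ^ n * x) ^ p * y ^ n) * ((y ^ n * x) ^ N * x) := by rw [← hfx]
      _ = ((y ^ n * x) ^ p * y ^ n) * (y ^ n * x) ^ N * x := by rw [← mul_assoc]
  have hiter6 : ∀ j : ℕ, (y ^ n * x) ^ N
      = ((y ^ n * x) ^ p * y ^ n) ^ j * (y ^ n * x) ^ N * x ^ j := by
    intro j
    induction j with
    | zero => simp
    | succ j ih =>
      calc (y ^ n * x) ^ N
          = ((y ^ n * x) ^ p * y ^ n) ^ j * (y ^ n * x) ^ N * x ^ j := ih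
        _ = ((y ^ n * x) ^ p * y ^ n) ^ j
              * (((y ^ n * x) ^ p * y ^ n) * (y ^ n * x) ^ N * x) * x ^ j := by
            rw [← hstep6]
        _ = (((y ^ n * x) ^ p * y ^ n) ^ j * ((y ^ n * x) ^ p * y ^ n))
              * (y ^ n * x) ^ N * (x * x ^ j) := by simp only [mul_assoc]
        _ = ((y ^ n * x) ^ p * y ^ n) ^ (j + 1) * (y ^ n * x) ^ N * x ^ (j + 1) := by
            rw [pow_succ, pow_succ']
  have hfxN : (y ^ n * x) ^ N * x ^ N = (y ^ n * x) ^ N := by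
    have h6 := hiter6 N
    calc (y ^ n * x) ^ N * x ^ N
        = (((y ^ n * x) ^ p * y ^ n) ^ N * (y ^ n * x) ^ N * x ^ N) * x ^ N := by
          conv_lhs => rw [h6]
      _ = ((y ^ n * x) ^ p * y ^ n) ^ N * (y ^ n * x) ^ N * (x ^ N * x ^ N) := by
          simp only [mul_assoc]
      _ = ((y ^ n * x) ^ p * y ^ n) ^ N * (y ^ n * x) ^ N * x ^ N := by
          rw [hidem x]
      _ = (y ^ n * x) ^ N := h6.symm
  -- e * x^N = e
  have hcn_split3 : (y ^ N * x) ^ n = ((y ^ N * x) ^ p * y ^ N) * x := by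
    calc (y ^ N * x) ^ n = (y ^ N * x) ^ p * (y ^ N * x) := hpeelN _
      _ = ((y ^ N * x) ^ p * y ^ N) * x := by rw [← mul_assoc]
  have hstepE : (y ^ N * x) ^ N
      = ((y ^ N * x) ^ p * y ^ N) * (y ^ N * x) ^ N * x := by
    calc (y ^ N * x) ^ N = (y ^ N * x) ^ n * (y ^ N * x) ^ N := (habs' _).symm
      _ = (((y ^ N * x) ^ p * y ^ N) * x) * (y ^ N * x) ^ N := by rw [hcn_split3]
      _ = ((y ^ N * x) ^ p * y ^ N) * (x * (y ^ N * x) ^ N) := by rw [mul_assoc]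
      _ = ((y ^ N * x) ^ p * y ^ N) * ((y ^ N * x) ^ N * x) := by rw [← hex]
      _ = ((y ^ N * x) ^ p * y ^ N) * (y ^ N * x) ^ N * x := by rw [← mul_assoc]
  have hiterE : ∀ j : ℕ, (y ^ N * x) ^ N
      = ((y ^ N * x) ^ p * y ^ N) ^ j * (y ^ N * x) ^ N * x ^ j := by
    intro j
    induction j with
    | zero => simp
    | succ j ih =>
      calc (y ^ N * x) ^ N
          = ((y ^ N * x) ^ p * y ^ N) ^ j * (y ^ N * x) ^ N * x ^ j := ih
        _ = ((y ^ N * x) ^ p * y ^ N) ^ j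
              * (((y ^ N * x) ^ p * y ^ N) * (y ^ N * x) ^ N * x) * x ^ j := by
            rw [← hstepE]
        _ = (((y ^ N * x) ^ p * y ^ N) ^ j * ((y ^ N * x) ^ p * y ^ N))
              * (y ^ N * x) ^ N * (x * x ^ j) := by simp only [mul_assoc]
        _ = ((y ^ N * x) ^ p * y ^ N) ^ (j + 1) * (y ^ N * x) ^ N * x ^ (j + 1) := by
            rw [pow_succ, pow_succ']
  have hexN : (y ^ N * x) ^ N * x ^ N = (y ^ N * x) ^ N := by
    have h7 := hiterE N
    calc (y ^ N * x) ^ N * x ^ N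
        = (((y ^ N * x) ^ p * y ^ N) ^ N * (y ^ N * x) ^ N * x ^ N) * x ^ N := by
          conv_lhs => rw [h7]
      _ = ((y ^ N * x) ^ p * y ^ N) ^ N * (y ^ N * x) ^ N * (x ^ N * x ^ N) := by
          simp only [mul_assoc]
      _ = ((y ^ N * x) ^ p * y ^ N) ^ N * (y ^ N * x) ^ N * x ^ N := by
          rw [hidem x]
      _ = (y ^ N * x) ^ N := h7.symm
  -- f * e = f
  have hiter7 : ∀ j : ℕ, (y ^ n * x) ^ N * (y ^ N * x) ^ j
      = x ^ j * (y ^ n * x) ^ N := by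
    intro j
    induction j with
    | zero => simp
    | succ j ih =>
      calc (y ^ n * x) ^ N * (y ^ N * x) ^ (j + 1)
          = ((y ^ n * x) ^ N * (y ^ N * x) ^ j) * (y ^ N * x) := by
            rw [pow_succ, ← mul_assoc]
        _ = (x ^ j * (y ^ n * x) ^ N) * (y ^ N * x) := by rw [ih]
        _ = x ^ j * (((y ^ n * x) ^ N * y ^ N) * x) := by simp only [mul_assoc]
        _ = x ^ j * ((y ^ n * x) ^ N * x) := by rw [hfz]
        _ = x ^ j * (x * (y ^ n * x) ^ N) := by rw [hfx]
        _ = x ^ (j + 1) * (y ^ n * x) ^ N := by rw [pow_succ, mul_assoc]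
  have hFe : (y ^ n * x) ^ N * (y ^ N * x) ^ N = (y ^ n * x) ^ N := by
    calc (y ^ n * x) ^ N * (y ^ N * x) ^ N = x ^ N * (y ^ n * x) ^ N := hiter7 N
      _ = (y ^ n * x) ^ N * x ^ N := ((hCfx.pow_right N).eq).symm
      _ = (y ^ n * x) ^ N := hfxN
  -- e * f = e
  have hec : (y ^ N * x) ^ N * (y ^ n * x) = x * (y ^ N * x) ^ N := by
    calc (y ^ N * x) ^ N * (y ^ n * x)
        = ((y ^ N * x) ^ N * y ^ n) * x := by rw [← mul_assoc]
      _ = (y ^ N * x) ^ N * x := by rw [heyn]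
      _ = x * (y ^ N * x) ^ N := hex
  have heck : ∀ j : ℕ, (y ^ N * x) ^ N * (y ^ n * x) ^ j
      = x ^ j * (y ^ N * x) ^ N := by
    intro j
    induction j with
    | zero => simp
    | succ j ih =>
      calc (y ^ N * x) ^ N * (y ^ n * x) ^ (j + 1)
          = ((y ^ N * x) ^ N * (y ^ n * x) ^ j) * (y ^ n * x) := by
            rw [pow_succ, ← mul_assoc]
        _ = (x ^ j * (y ^ N * x) ^ N) * (y ^ n * x) := by rw [ih]
        _ = x ^ j * ((y ^ N * x) ^ N * (y ^ n * x)) := by rw [mul_assoc]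
        _ = x ^ j * (x * (y ^ N * x) ^ N) := by rw [hec]
        _ = x ^ (j + 1) * (y ^ N * x) ^ N := by rw [pow_succ, mul_assoc]
  have hEf : (y ^ N * x) ^ N * (y ^ n * x) ^ N = (y ^ N * x) ^ N := by
    calc (y ^ N * x) ^ N * (y ^ n * x) ^ N = x ^ N * (y ^ N * x) ^ N := heck N
      _ = (y ^ N * x) ^ N * x ^ N := ((hCex.pow_right N).eq).symm
      _ = (y ^ N * x) ^ N := hexN
  -- conclude e = f
  have hCfE : Commute ((y ^ n * x) ^ N) ((y ^ N * x) ^ N) :=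
    (hCfz.mul_right hCfx).pow_right N
  have hEF : (y ^ N * x) ^ N = (y ^ n * x) ^ N := by
    calc (y ^ N * x) ^ N
        = (y ^ N * x) ^ N * (y ^ n * x) ^ N := hEf.symm
      _ = (y ^ n * x) ^ N * (y ^ N * x) ^ N := hCfE.eq.symm
      _ = (y ^ n * x) ^ N := hFe
  rw [hωN y, hωN (x * y ^ N), hωN (y ^ n * x), he2]
  exact hEF
end

section
/- Let $M$ be a finite monoid with idempotent powers $s^{\omega}$, and let $n \geq 1$. Assume $M$ satisfies $s^{\omega} s^{n} = s^{\omega}$ and $(x y^{\omega})^{\omega} = (y^{n} x)^{\omega}$ for all $x, y, s \in M$. Then $M$ satisfies $(x y^{\omega} z)^{\omega} \cdot x y^{\omega} z = (x y^{n} z)^{\omega} \cdot x y^{n} z$ for all $x, y, z \in M$. -/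
section Aux

variable {M : Type*} [Monoid M]

private lemma idemPowAux {e : M} (he : IsIdempotentElem e) : ∀ j : ℕ, e ^ (j + 1) = e := by
  intro j
  induction j with
  | zero => simp
  | succ k ih => rw [pow_succ, ih, he.eq]

private lemma conjPowAux (a b : M) : ∀ N : ℕ, (a * b) ^ (N + 1) = a * (b * a) ^ N * b := by
  intro N
  induction N with
  | zero => simp
  | succ k ih =>
    rw [pow_succ', ih, pow_succ']
    simp [mul_assoc]

end Aux

theorem stmt13 {M : Type*} [Monoid M] [Finite M] (n : ℕ) (hn : 1 ≤ n)
    (ω : M → M) (hω : ∀ s : M, IsIdempotentElem (ω s) ∧ ∃ k, 1 ≤ k ∧ ω s = s ^ k)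
    (h1 : ∀ s : M, ω s * s ^ n = ω s)
    (h2 : ∀ x y : M, ω (x * ω y) = ω (y ^ n * x)) :
    ∀ x y z : M,
      ω (x * ω y * z) * (x * ω y * z) = ω (x * y ^ n * z) * (x * y ^ n * z) := by
  -- rotation lemma: ω(ab)·(ab) = a · ω(ba) · b
  have rot : ∀ a b : M, ω (a * b) * (a * b) = a * ω (b * a) * b := by
    intro a b
    obtain ⟨hi1, k1, hk1, he1⟩ := hω (a * b)
    obtain ⟨hi2, k2, hk2, he2⟩ := hω (b * a)
    obtain ⟨k1', rfl⟩ : ∃ k', k1 = k' + 1 := ⟨k1 - 1, by omega⟩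
    obtain ⟨k2', rfl⟩ : ∃ k', k2 = k' + 1 := ⟨k2 - 1, by omega⟩
    have hN1 : (a * b) ^ ((k1' + 1) * (k2' + 1)) = ω (a * b) := by
      rw [pow_mul, ← he1]
      exact idemPowAux hi1 k2'
    have hN2 : (b * a) ^ ((k1' + 1) * (k2' + 1)) = ω (b * a) := by
      rw [mul_comm (k1' + 1), pow_mul, ← he2]
      exact idemPowAux hi2 k1'
    calc ω (a * b) * (a * b)
        = (a * b) ^ ((k1' + 1) * (k2' + 1)) * (a * b) := by rw [hN1]
      _ = (a * b) ^ ((k1' + 1) * (k2' + 1) + 1) := by rw [pow_succ]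
      _ = a * (b * a) ^ ((k1' + 1) * (k2' + 1)) * b := conjPowAux a b _
      _ = a * ω (b * a) * b := by rw [hN2]
  -- the commutation lemma: ω(ωy · c) = ω(c · ωy)
  have L : ∀ y c : M, ω (ω y * c) = ω (c * ω y) := by
    intro y c
    have key : ∀ j : ℕ, ∀ c : M, ω (y ^ ((j + 1) * n) * c) = ω (c * ω y) := by
      intro j
      induction j with
      | zero => intro c; simpa using (h2 c y).symm
      | succ i ih =>
        intro c
        obtain ⟨hiy, ky, hky, hey⟩ := hω y
        calc ω (y ^ ((i + 1 + 1) * n) * c)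
            = ω (y ^ n * (y ^ ((i + 1) * n) * c)) := by
              rw [show (i + 1 + 1) * n = n + (i + 1) * n by ring, pow_add, mul_assoc]
          _ = ω ((y ^ ((i + 1) * n) * c) * ω y) := (h2 _ y).symm
          _ = ω (y ^ ((i + 1) * n) * (c * ω y)) := by rw [mul_assoc]
          _ = ω ((c * ω y) * ω y) := ih _
          _ = ω (c * ω y) := by rw [mul_assoc, hiy.eq]
    obtain ⟨hiy, ky, hky, hey⟩ := hω y
    obtain ⟨ky', rfl⟩ : ∃ k', ky = k' + 1 := ⟨ky - 1, by omega⟩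
    obtain ⟨n', rfl⟩ : ∃ n', n = n' + 1 := ⟨n - 1, by omega⟩
    have hyk : y ^ ((ky' + 1) * (n' + 1)) = ω y := by
      rw [pow_mul, ← hey]
      exact idemPowAux (hey ▸ hiy) n'
    have := key ky' c
    rwa [hyk] at this
  intro x y z
  obtain ⟨hiy, ky, hky, hey⟩ := hω y
  -- the common idempotent g
  set g := ω (y ^ n * (z * x)) with hg
  have hg1 : ω ((z * x) * ω y) = g := h2 (z * x) y
  have hg2 : ω (ω y * (z * x)) = g := by rw [L y (z * x), hg1]
  -- absorption: g * ω y = g  and  g * y ^ n = g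
  obtain ⟨hig, kg, hkg, heg⟩ := hω ((z * x) * ω y)
  obtain ⟨kg', rfl⟩ : ∃ k', kg = k' + 1 := ⟨kg - 1, by omega⟩
  have habs : ∀ w : M, ω y * w = ω y → g * w = g := by
    intro w hw
    rw [← hg1, heg, pow_succ, mul_assoc ((z * x * ω y) ^ kg'), mul_assoc (z * x), hw]
  have gabs_e : g * ω y = g := habs (ω y) hiy.eq
  have gabs_n : g * y ^ n = g := habs (y ^ n) (h1 y)
  calc ω (x * ω y * z) * (x * ω y * z)
      = ω (x * (ω y * z)) * (x * (ω y * z)) := by rw [mul_assoc]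
    _ = x * ω ((ω y * z) * x) * (ω y * z) := rot x (ω y * z)
    _ = x * g * (ω y * z) := by rw [mul_assoc (ω y) z x, hg2]
    _ = x * (g * ω y) * z := by simp [mul_assoc]
    _ = x * g * z := by rw [gabs_e]
    _ = x * (g * y ^ n) * z := by rw [gabs_n]
    _ = x * g * (y ^ n * z) := by simp [mul_assoc]
    _ = x * ω ((y ^ n * z) * x) * (y ^ n * z) := by rw [mul_assoc (y ^ n) z x, hg]
    _ = ω (x * (y ^ n * z)) * (x * (y ^ n * z)) := (rot x (y ^ n * z)).symm
    _ = ω (x * y ^ n * z) * (x * y ^ n * z) := by rw [mul_assoc]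
end

section
/- Let $M$ be a finite ordered monoid (a finite monoid with a partial order compatible with multiplication) satisfying $1 \le s^{n}$ for all $s \in M$, where $n \geq 1$. Then for all $x, y, z \in M$: $(x y^{\omega} z)^{\omega} \cdot x y^{\omega} z = (x y^{n} z)^{\omega} \cdot x y^{n} z$, where $s^{\omega}$ denotes the unique idempotent power of $s$. -/
theorem stmt14 {M : Type*} [Monoid M] [Finite M] [PartialOrder M]
    (hcomp : ∀ u v x y : M, u ≤ v → x * u * y ≤ x * v * y)
    (n : ℕ) (hn : 1 ≤ n) (hpos : ∀ s : M, 1 ≤ s ^ n)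
    (ω : M → M) (hω : ∀ s : M, IsIdempotentElem (ω s) ∧ ∃ k, 1 ≤ k ∧ ω s = s ^ k) :
    ∀ x y z : M,
      ω (x * ω y * z) * (x * ω y * z) = ω (x * y ^ n * z) * (x * y ^ n * z) := by
  have hmul : ∀ a b c d : M, a ≤ b → c ≤ d → a * c ≤ b * d := by
    intro a b c d h1 h2
    have h3 : a * c ≤ a * d := by simpa using hcomp c d a 1 h2
    have h4 : a * d ≤ b * d := by simpa using hcomp a b 1 d h1
    exact h3.trans h4
  have hpowle : ∀ (a b : M) (m : ℕ), a ≤ b → a ^ m ≤ b ^ m := by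
    intro a b m h
    induction m with
    | zero => simp
    | succ m ih => rw [pow_succ, pow_succ]; exact hmul _ _ _ _ ih h
  have hidpow : ∀ (e : M), IsIdempotentElem e → ∀ m : ℕ, e ^ (m + 1) = e := by
    intro e he m
    induction m with
    | zero => simp
    | succ m ih => rw [pow_succ, ih, he]
  have homega : ∀ (u : M) (k d : ℕ), ω u = u ^ k → 1 ≤ d → u ^ (k * d) = ω u := by
    intro u k d he hd
    obtain ⟨d', rfl⟩ : ∃ d', d = d' + 1 := ⟨d - 1, by omega⟩
    rw [pow_mul, ← he, hidpow _ (hω u).1 d']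
  intro x y z
  set a := y ^ n with ha
  set r := z * x with hr
  set s := x * a * z with hs
  set t := x * ω y * z with ht
  have h1a : (1 : M) ≤ a := hpos y
  have h1r : (1 : M) ≤ r ^ n := hpos (z * x)
  obtain ⟨hyid, ky, hky1, hkye⟩ := hω y
  obtain ⟨hsid, ks, hks1, hkse⟩ := hω s
  obtain ⟨htid, kt, hkt1, hkte⟩ := hω t
  obtain ⟨ky', rfl⟩ : ∃ j, ky = j + 1 := ⟨ky - 1, by omega⟩
  obtain ⟨ks', rfl⟩ : ∃ j, ks = j + 1 := ⟨ks - 1, by omega⟩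
  obtain ⟨kt', rfl⟩ : ∃ j, kt = j + 1 := ⟨kt - 1, by omega⟩
  -- Step A : y^n ≤ ω y
  have hstepA : ∀ j : ℕ, y ^ n ≤ y ^ ((j + 1) * n) := by
    intro j
    induction j with
    | zero => simp
    | succ j ih =>
      calc y ^ n ≤ y ^ ((j + 1) * n) := ih
        _ = y ^ ((j + 1) * n) * 1 := (mul_one _).symm
        _ ≤ y ^ ((j + 1) * n) * y ^ n := hmul _ _ _ _ le_rfl (hpos y)
        _ = y ^ ((j + 1 + 1) * n) := by rw [← pow_add]; congr 1; ring
  have hA : a ≤ ω y := by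
    calc a = y ^ n := ha
      _ ≤ y ^ ((ky' + 1) * n) := hstepA ky'
      _ = ω y := homega y (ky' + 1) n hkye hn
  have hB : s ≤ t := by
    rw [hs, ht]; exact hcomp a (ω y) x z hA
  -- insertion chain
  have hc1 : ∀ m : ℕ, a ^ (m + 1) ≤ a * (r ^ n * a) ^ m := by
    intro m
    induction m with
    | zero => simp
    | succ m ih =>
      have haux : a ≤ r ^ n * a := by
        calc a = 1 * a := (one_mul a).symm
          _ ≤ r ^ n * a := hmul _ _ _ _ h1r le_rfl
      calc a ^ (m + 1 + 1) = a ^ (m + 1) * a := pow_succ a (m + 1)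
        _ ≤ (a * (r ^ n * a) ^ m) * (r ^ n * a) := hmul _ _ _ _ ih haux
        _ = a * (r ^ n * a) ^ (m + 1) := by rw [mul_assoc, ← pow_succ]
  have hc2aux : ∀ j : ℕ, r ^ (j + 1) * a ≤ (r * a) ^ (j + 1) := by
    intro j
    induction j with
    | zero => simp
    | succ j ih =>
      have haux : (r * a) ^ (j + 1) ≤ a * (r * a) ^ (j + 1) := by
        calc (r * a) ^ (j + 1) = 1 * (r * a) ^ (j + 1) := (one_mul _).symm
          _ ≤ a * (r * a) ^ (j + 1) := hmul _ _ _ _ h1a le_rfl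
      calc r ^ (j + 1 + 1) * a = r * (r ^ (j + 1) * a) := by
            rw [pow_succ' r (j + 1)]; exact mul_assoc r _ a
        _ ≤ r * (r * a) ^ (j + 1) := hmul _ _ _ _ le_rfl ih
        _ ≤ r * (a * (r * a) ^ (j + 1)) := hmul _ _ _ _ le_rfl haux
        _ = (r * a) ^ (j + 1 + 1) := by rw [pow_succ' (r * a) (j + 1)]; exact (mul_assoc r a _).symm
  have hc2 : r ^ n * a ≤ (r * a) ^ n := by
    obtain ⟨j, hj⟩ : ∃ j, n = j + 1 := ⟨n - 1, by omega⟩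
    rw [hj]; exact hc2aux j
  have hchain : ∀ m : ℕ, a ^ (m + 1) ≤ a * (r * a) ^ (n * m) := by
    intro m
    calc a ^ (m + 1) ≤ a * (r ^ n * a) ^ m := hc1 m
      _ ≤ a * ((r * a) ^ n) ^ m := hmul _ _ _ _ le_rfl (hpowle _ _ m hc2)
      _ = a * (r * a) ^ (n * m) := by rw [← pow_mul]
  have hc3 : ∀ N : ℕ, x * (a * (r * a) ^ N) * z = s ^ (N + 1) := by
    intro N
    induction N with
    | zero => simp [hs]
    | succ N ih =>
      rw [pow_succ (s) (N + 1), ← ih, hs, hr]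
      rw [pow_succ]
      simp only [mul_assoc]
  -- Step C : t ≤ ω s * s
  have hωy : ω y = a ^ (2 * ky' + 1 + 1) := by
    rw [ha, ← pow_mul]
    rw [show n * (2 * ky' + 1 + 1) = (ky' + 1) * (2 * n) by ring]
    exact (homega y (ky' + 1) (2 * n) hkye (by omega)).symm
  have h5 : t ≤ s ^ (n * (2 * ky' + 1) + 1) := by
    rw [ht, hωy]
    calc x * a ^ (2 * ky' + 1 + 1) * z ≤ x * (a * (r * a) ^ (n * (2 * ky' + 1))) * z :=
          hcomp _ _ x z (hchain (2 * ky' + 1))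
      _ = s ^ (n * (2 * ky' + 1) + 1) := hc3 _
  have h6 : s ^ (n * (2 * ky' + 1) + 1) ≤ ω s * s := by
    have hgoal : s ^ (n * (2 * ky' + 1) + 1) * (s ^ n) ^ (ks' * (2 * (ky' + 1)) + 1)
        = ω s * s := by
      rw [← pow_mul, ← pow_add]
      rw [show n * (2 * ky' + 1) + 1 + n * (ks' * (2 * (ky' + 1)) + 1)
            = (ks' + 1) * (2 * n * (ky' + 1)) + 1 by ring]
      rw [pow_succ, homega s (ks' + 1) (2 * n * (ky' + 1)) hkse (by nlinarith)]
    calc s ^ (n * (2 * ky' + 1) + 1)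
        = s ^ (n * (2 * ky' + 1) + 1) * 1 := (mul_one _).symm
      _ ≤ s ^ (n * (2 * ky' + 1) + 1) * (s ^ n) ^ (ks' * (2 * (ky' + 1)) + 1) :=
          hmul _ _ _ _ le_rfl (by simpa using hpowle 1 (s ^ n) (ks' * (2 * (ky' + 1)) + 1) (hpos s))
      _ = ω s * s := hgoal
  have hC : t ≤ ω s * s := h5.trans h6
  -- common powers
  have hsm : s ^ ((ks' + 1) * (kt' + 1) + 1) = ω s * s := by
    rw [pow_succ, homega s (ks' + 1) (kt' + 1) hkse (by omega)]
  have htm : t ^ ((ks' + 1) * (kt' + 1) + 1) = ω t * t := by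
    rw [pow_succ, show (ks' + 1) * (kt' + 1) = (kt' + 1) * (ks' + 1) by ring,
      homega t (kt' + 1) (ks' + 1) hkte (by omega)]
  have hE : ω s * s ≤ ω t * t := by
    rw [← hsm, ← htm]
    exact hpowle s t _ hB
  have hfix : (ω s * s) ^ ((ks' + 1) * (kt' + 1) + 1) = ω s * s := by
    have h7 : ω s * s = s ^ (ks' + 1 + 1) := by rw [hkse, ← pow_succ]
    rw [h7, ← pow_mul]
    rw [show (ks' + 1 + 1) * ((ks' + 1) * (kt' + 1) + 1)
          = (ks' + 1) * ((ks' + 1) * (kt' + 1) + 1 + (kt' + 1)) + 1 by ring]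
    rw [pow_succ, homega s (ks' + 1) _ hkse (by omega), hkse, ← pow_succ]
  have hD : ω t * t ≤ ω s * s := by
    rw [← htm, ← hfix]
    exact hpowle t (ω s * s) _ hC
  exact le_antisymm hD hE
end

section
/- Let $M$ be a finite monoid, $G$ a group, and $\varphi : M \to G$ a surjective monoid homomorphism. Then there exists a subgroup $H$ of $M$ (i.e., a subsemigroup of $M$ which is a group under the induced operation, whose identity element is some idempotent of $M$, not necessarily $1_M$) such that $\varphi(H) = G$. -/
theorem stmt16 {M G : Type*} [Monoid M] [Finite M] [Group G]
    (φ : M →* G) (hφ : Function.Surjective φ) :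
    ∃ (H : Set M) (e : M),
      e ∈ H ∧ e * e = e ∧
      (∀ x ∈ H, ∀ y ∈ H, x * y ∈ H) ∧
      (∀ x ∈ H, e * x = x ∧ x * e = x) ∧
      (∀ x ∈ H, ∃ y ∈ H, x * y = e ∧ y * x = e) ∧
      φ '' H = Set.univ := by
  classical
  have hwf : WellFounded ((· < ·) : Set M → Set M → Prop) :=
    Finite.to_wellFoundedLT.wf
  obtain ⟨S, hS, hmin⟩ := hwf.has_min
    {S : Set M | S.Nonempty ∧ (∀ x ∈ S, ∀ y ∈ S, x * y ∈ S) ∧ φ '' S = Set.univ}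
    ⟨Set.univ, ⟨1, trivial⟩, fun _ _ _ _ => trivial, by
      simpa [Set.image_univ] using Set.range_eq_univ.mpr hφ⟩
  obtain ⟨hne, hcl, himg⟩ := hS
  have hsur : ∀ g : G, ∃ x ∈ S, φ x = g := by
    intro g
    have : g ∈ φ '' S := himg.symm ▸ Set.mem_univ g
    simpa using this
  -- left translation by any element of S is onto S
  have hleft : ∀ s ∈ S, (s * ·) '' S = S := by
    intro s hs
    have hsub : (s * ·) '' S ⊆ S := by
      rintro _ ⟨x, hx, rfl⟩; exact hcl s hs x hx
    have hP : ((s * ·) '' S) ∈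
        {S : Set M | S.Nonempty ∧ (∀ x ∈ S, ∀ y ∈ S, x * y ∈ S) ∧ φ '' S = Set.univ} := by
      refine ⟨⟨s * s, ⟨s, hs, rfl⟩⟩, ?_, ?_⟩
      · rintro _ ⟨x, hx, rfl⟩ _ ⟨y, hy, rfl⟩
        exact ⟨x * (s * y), hcl x hx _ (hcl s hs y hy), by simp [mul_assoc]⟩
      · apply Set.eq_univ_of_forall
        intro g
        obtain ⟨x, hx, hxg⟩ := hsur ((φ s)⁻¹ * g)
        exact ⟨s * x, ⟨x, hx, rfl⟩, by simp [hxg]⟩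
    by_contra hne'
    exact hmin _ hP (Set.ssubset_iff_subset_ne.mpr ⟨hsub, hne'⟩)
  -- right translation
  have hright : ∀ s ∈ S, (· * s) '' S = S := by
    intro s hs
    have hsub : (· * s) '' S ⊆ S := by
      rintro _ ⟨x, hx, rfl⟩; exact hcl x hx s hs
    have hP : ((· * s) '' S) ∈
        {S : Set M | S.Nonempty ∧ (∀ x ∈ S, ∀ y ∈ S, x * y ∈ S) ∧ φ '' S = Set.univ} := by
      refine ⟨⟨s * s, ⟨s, hs, rfl⟩⟩, ?_, ?_⟩
      · rintro _ ⟨x, hx, rfl⟩ _ ⟨y, hy, rfl⟩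
        exact ⟨x * s * y, hcl _ (hcl x hx s hs) y hy, by simp [mul_assoc]⟩
      · apply Set.eq_univ_of_forall
        intro g
        obtain ⟨x, hx, hxg⟩ := hsur (g * (φ s)⁻¹)
        exact ⟨x * s, ⟨x, hx, rfl⟩, by simp [hxg, mul_assoc]⟩
    by_contra hne'
    exact hmin _ hP (Set.ssubset_iff_subset_ne.mpr ⟨hsub, hne'⟩)
  obtain ⟨a, ha⟩ := hne
  -- right identity e
  obtain ⟨e, he, hae⟩ : ∃ e ∈ S, a * e = a := by
    have : a ∈ (a * ·) '' S := (hleft a ha).symm ▸ ha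
    simpa using this
  have hre : ∀ x ∈ S, x * e = x := by
    intro x hx
    obtain ⟨y, hy, hyx⟩ : ∃ y ∈ S, y * a = x := by
      have : x ∈ (· * a) '' S := (hright a ha).symm ▸ hx
      simpa using this
    calc x * e = y * (a * e) := by rw [← hyx, mul_assoc]
    _ = x := by rw [hae, hyx]
  -- left identity f, which equals e
  obtain ⟨f, hf, hfa⟩ : ∃ f ∈ S, f * a = a := by
    have : a ∈ (· * a) '' S := (hright a ha).symm ▸ ha
    simpa using this
  have hle : ∀ x ∈ S, f * x = x := by
    intro x hx
    obtain ⟨y, hy, hyx⟩ : ∃ y ∈ S, a * y = x := by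
      have : x ∈ (a * ·) '' S := (hleft a ha).symm ▸ hx
      simpa using this
    calc f * x = f * a * y := by rw [← hyx, mul_assoc]
    _ = x := by rw [hfa, hyx]
  have hef : f = e := by
    have h1 := hre f hf
    have h2 := hle e he
    rw [← h1, h2]
  have hle' : ∀ x ∈ S, e * x = x := fun x hx => hef ▸ hle x hx
  refine ⟨S, e, he, hre e he, hcl, fun x hx => ⟨hle' x hx, hre x hx⟩, ?_, himg⟩
  intro x hx
  obtain ⟨y, hy, hxy⟩ : ∃ y ∈ S, x * y = e := by
    have : e ∈ (x * ·) '' S := (hleft x hx).symm ▸ he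
    simpa using this
  obtain ⟨z, hz, hzx⟩ : ∃ z ∈ S, z * x = e := by
    have : e ∈ (· * x) '' S := (hright x hx).symm ▸ he
    simpa using this
  have hzy : z = y := by
    calc z = z * e := (hre z hz).symm
    _ = z * x * y := by rw [← hxy, mul_assoc]
    _ = y := by rw [hzx, hle' y hy]
  exact ⟨y, hy, hxy, hzy ▸ hzx⟩
end

section
/- Let $M$ be a finite monoid with idempotent powers $s^{\omega}$, and let $n \geq 1$. Assume $M$ satisfies, for all $x, y, z \in M$, both $(x y^{n} z)^{\omega+1} = (xz)^{\omega+1}(x y^{n} z)^{\omega}$ and $(x y^{n} z)^{\omega} = (xz)^{\omega}(x y^{n} z)^{\omega}$, where $s^{\omega+1} = s^{\omega}s$. Define a relation on $M$: $u \to v$ iff there exist $x, z, t \in M$ with $u = xz$ and $v = x t^{n} z$. Then for any chain $u = u_1 \to u_2 \to \cdots \to u_m = v$, one has $v^{\omega+1} = u^{\omega+1} v^{\omega}$ in $M$. -/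
theorem stmt17 {M : Type*} [Monoid M] [Finite M] (n : ℕ) (hn : 1 ≤ n)
    (ω : M → M) (hω : ∀ s : M, IsIdempotentElem (ω s) ∧ ∃ k, 1 ≤ k ∧ ω s = s ^ k)
    (h1 : ∀ x y z : M,
      ω (x * y ^ n * z) * (x * y ^ n * z) = (ω (x * z) * (x * z)) * ω (x * y ^ n * z))
    (h2 : ∀ x y z : M, ω (x * y ^ n * z) = ω (x * z) * ω (x * y ^ n * z))
    (r : M → M → Prop)
    (hr : ∀ u v : M, r u v ↔ ∃ x z t : M, u = x * z ∧ v = x * t ^ n * z)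
    (u v : M) (huv : Relation.ReflTransGen r u v) :
    ω v * v = (ω u * u) * ω v := by
  induction huv with
  | refl =>
    obtain ⟨hid, k, hk, hku⟩ := hω u
    calc ω u * u = ω u * ω u * u := by rw [hid]
    _ = ω u * u * ω u := by rw [hku, mul_assoc, mul_assoc, pow_mul_comm']
  | tail hbc hstep ih =>
    rename_i b c
    obtain ⟨x, z, t, hb, hc⟩ := (hr b c).mp hstep
    subst hb hc
    calc ω (x * t ^ n * z) * (x * t ^ n * z)
        = (ω (x * z) * (x * z)) * ω (x * t ^ n * z) := h1 x t z
      _ = ((ω u * u) * ω (x * z)) * ω (x * t ^ n * z) := by rw [ih]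
      _ = (ω u * u) * (ω (x * z) * ω (x * t ^ n * z)) := by rw [mul_assoc]
      _ = (ω u * u) * ω (x * t ^ n * z) := by rw [← h2 x t z]
end

section
/- Let $M$ be a finite monoid with idempotent powers, $n \geq 1$, and suppose $M$ satisfies, for all $x,y,z \in M$: $(x y^{n} z)^{\omega+1} = (xz)^{\omega+1}(x y^{n} z)^{\omega}$, $(x y^{n} z)^{\omega} = (xz)^{\omega}(x y^{n} z)^{\omega}$, and the left-right dual identities. Let $\to$ be the relation: $u \to v$ iff $u = xz$ and $v = x t^{n} z$ for some $x,z,t \in M$, and let $\to^{*}$ be its reflexive-transitive closure. If $u \to^{*} v$ and $v \to^{*} u$, then $u^{\omega+1} = v^{\omega+1}$. -/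
theorem stmt18 {M : Type*} [Monoid M] [Finite M] (n : ℕ) (hn : 1 ≤ n)
    (ω : M → M) (hω : ∀ s : M, IsIdempotentElem (ω s) ∧ ∃ k, 1 ≤ k ∧ ω s = s ^ k)
    (h1 : ∀ x y z : M,
      ω (x * y ^ n * z) * (x * y ^ n * z) = (ω (x * z) * (x * z)) * ω (x * y ^ n * z))
    (h2 : ∀ x y z : M, ω (x * y ^ n * z) = ω (x * z) * ω (x * y ^ n * z))
    (h1' : ∀ x y z : M,
      ω (x * y ^ n * z) * (x * y ^ n * z) = ω (x * y ^ n * z) * (ω (x * z) * (x * z)))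
    (h2' : ∀ x y z : M, ω (x * y ^ n * z) = ω (x * y ^ n * z) * ω (x * z))
    (r : M → M → Prop)
    (hr : ∀ u v : M, r u v ↔ ∃ x z t : M, u = x * z ∧ v = x * t ^ n * z)
    (u v : M) (huv : Relation.ReflTransGen r u v) (hvu : Relation.ReflTransGen r v u) :
    ω u * u = ω v * v := by
  have hcomm : ∀ s : M, ω s * s = s * ω s := by
    intro s
    obtain ⟨-, k, -, he⟩ := hω s
    rw [he]
    exact ((Commute.refl s).pow_left k)
  have hid : ∀ s : M, ω s * ω s = ω s := fun s => (hω s).1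
  have fwd : ∀ a b : M, Relation.ReflTransGen r a b → ω b * b = (ω a * a) * ω b := by
    intro a b hab
    induction hab with
    | refl =>
      conv_rhs => rw [mul_assoc, ← hcomm a, ← mul_assoc, hid]
    | @tail p q h step ih =>
      obtain ⟨x, z, t, hp, hq⟩ := (hr p q).1 step
      subst hp; subst hq
      calc ω (x * t ^ n * z) * (x * t ^ n * z)
          = (ω (x * z) * (x * z)) * ω (x * t ^ n * z) := h1 x t z
        _ = (ω a * a * ω (x * z)) * ω (x * t ^ n * z) := by rw [ih]
        _ = ω a * a * (ω (x * z) * ω (x * t ^ n * z)) := by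
            rw [mul_assoc (ω a * a)]
        _ = ω a * a * ω (x * t ^ n * z) := by rw [← h2 x t z]
  have bwd : ∀ a b : M, Relation.ReflTransGen r a b → ω b * b = ω b * (ω a * a) := by
    intro a b hab
    induction hab with
    | refl => rw [← mul_assoc, hid]
    | @tail p q h step ih =>
      obtain ⟨x, z, t, hp, hq⟩ := (hr p q).1 step
      subst hp; subst hq
      calc ω (x * t ^ n * z) * (x * t ^ n * z)
          = ω (x * t ^ n * z) * (ω (x * z) * (x * z)) := h1' x t z
        _ = ω (x * t ^ n * z) * (ω (x * z) * (ω a * a)) := by rw [ih]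
        _ = (ω (x * t ^ n * z) * ω (x * z)) * (ω a * a) := (mul_assoc _ _ _).symm
        _ = ω (x * t ^ n * z) * (ω a * a) := by rw [← h2' x t z]
  calc ω u * u = ω u * (ω v * v) := bwd v u hvu
    _ = ω u * ((ω u * u) * ω v) := by rw [← fwd u v huv]
    _ = ((ω u * ω u) * u) * ω v := by rw [← mul_assoc, ← mul_assoc]
    _ = (ω u * u) * ω v := by rw [hid]
    _ = ω v * v := (fwd u v huv).symm
end
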